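/- arXiv:2401.08027 — 9 statements merged into one kernel-verified Lean document; each statement's English description precedes it below -/
import Mathlib

section
/- (Kelvin–Arnol'd first theorem; first alternative of Theorem 1.) Suppose there exists α ∈ ℝ such that q(y)·(U(y) − α) ≤ 0 for every y ∈ [−L/2, L/2] (equivalently, the reciprocal Rossby Mach number M_α^{-1} = q/(κ₀²(U − α)) is nonpositive wherever it is defined). Then the flow is stable: for every wavenumber k ≥ 0 there is no unstable mode. -/
open Set

noncomputable section

/-- An unstable mode for wavenumber `k`: a pair `(c, ψ)` (with derivative data `ψ', ψ''`)
with `Im c ≠ 0`, `ψ` twice continuously differentiable on `[-L/2, L/2]`, not identically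
zero, vanishing at the boundary, and satisfying the eigenvalue equation. -/
def IsUnstableMode (L Ld k : ℝ) (U q : ℝ → ℝ) (c : ℂ) (ψ ψ' ψ'' : ℝ → ℂ) : Prop :=
  c.im ≠ 0 ∧
  (∀ y ∈ Icc (-L/2) (L/2), HasDerivAt ψ (ψ' y) y) ∧
  (∀ y ∈ Icc (-L/2) (L/2), HasDerivAt ψ' (ψ'' y) y) ∧
  ContinuousOn ψ'' (Icc (-L/2) (L/2)) ∧
  (∃ y ∈ Icc (-L/2) (L/2), ψ y ≠ 0) ∧
  ψ (-L/2) = 0 ∧ ψ (L/2) = 0 ∧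
  ∀ y ∈ Icc (-L/2) (L/2),
    ψ'' y - ((k^2 + 1/Ld^2 : ℝ) : ℂ) * ψ y + ((q y : ℂ) / ((U y : ℂ) - c)) * ψ y = 0

/-- Kelvin–Arnol'd first theorem (KA-I): if `q·(U − α) ≤ 0` on the channel for some shift
`α`, then the flow is stable. -/
theorem kelvin_arnold_first
    (L Ld : ℝ) (hL : 0 < L) (hLd : 0 < Ld)
    (U q : ℝ → ℝ)
    (hU : ContDiffOn ℝ 1 U (Icc (-L/2) (L/2)))
    (hq : ContDiffOn ℝ 1 q (Icc (-L/2) (L/2)))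
    (hα : ∃ α : ℝ, ∀ y ∈ Icc (-L/2) (L/2), q y * (U y - α) ≤ 0) :
    ∀ k : ℝ, 0 ≤ k → ∀ (c : ℂ) (ψ ψ' ψ'' : ℝ → ℂ),
      ¬ IsUnstableMode L Ld k U q c ψ ψ' ψ'' := by
  obtain ⟨α, hα⟩ := hα
  rintro k hk c ψ ψ' ψ'' ⟨hcim, hd1, hd2, hψ''c, ⟨y0, hy0, hψy0⟩, hbl, hbr, hode⟩
  set a : ℝ := -L/2 with ha
  set b : ℝ := L/2 with hb
  have hab : a < b := by rw [ha, hb]; linarith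
  have hab' : a ≤ b := hab.le
  have huIcc : uIcc a b = Icc a b := uIcc_of_le hab'
  set κ : ℝ := k^2 + 1/Ld^2 with hκdef
  have hκ : 0 < κ := by rw [hκdef]; positivity
  have hw : ∀ y : ℝ, ((U y : ℂ) - c) ≠ 0 := by
    intro y h
    exact hcim (neg_eq_zero.mp (by simpa using congrArg Complex.im h))
  set n : ℝ → ℝ := fun y => Complex.normSq (ψ y) with hn
  set p : ℝ → ℝ := fun y => Complex.normSq (ψ' y) with hp
  set d : ℝ → ℝ := fun y => Complex.normSq ((U y : ℂ) - c) with hd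
  have hdpos : ∀ y, 0 < d y := fun y => Complex.normSq_pos.mpr (hw y)
  -- continuity
  have hψc : ContinuousOn ψ (Icc a b) := fun y hy => (hd1 y hy).continuousAt.continuousWithinAt
  have hψ'c : ContinuousOn ψ' (Icc a b) := fun y hy => (hd2 y hy).continuousAt.continuousWithinAt
  have hUc : ContinuousOn U (Icc a b) := hU.continuousOn
  have hqc : ContinuousOn q (Icc a b) := hq.continuousOn
  have hnc : ContinuousOn n (Icc a b) := Complex.continuous_normSq.comp_continuousOn hψc
  have hpc : ContinuousOn p (Icc a b) := Complex.continuous_normSq.comp_continuousOn hψ'c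
  have hdc : ContinuousOn d (Icc a b) :=
    Complex.continuous_normSq.comp_continuousOn
      ((Complex.continuous_ofReal.comp_continuousOn hUc).sub continuousOn_const)
  -- the complex function whose derivative we integrate
  set F : ℝ → ℂ := fun y => (starRingEnd ℂ) (ψ y) * ψ' y with hF
  set F' : ℝ → ℂ := fun y => (starRingEnd ℂ) (ψ' y) * ψ' y + (starRingEnd ℂ) (ψ y) * ψ'' y with hF'
  have hFd : ∀ y ∈ Icc a b, HasDerivAt F (F' y) y := by
    intro y hy
    have h1 : HasDerivAt (fun x => (starRingEnd ℂ) (ψ x)) ((starRingEnd ℂ) (ψ' y)) y := by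
      exact (hd1 y hy).star
    exact h1.mul (hd2 y hy)
  have hF'c : ContinuousOn F' (Icc a b) := by
    rw [hF']
    exact ((continuous_star.comp_continuousOn hψ'c).mul hψ'c).add
      ((continuous_star.comp_continuousOn hψc).mul hψ''c)
  -- pointwise computation of real and imaginary parts of F'
  have hkey : ∀ y ∈ Icc a b, (F' y).re = p y + κ * n y - q y * (U y - c.re) / d y * n y ∧
      (F' y).im = -(c.im * (q y * n y / d y)) := by
    intro y hy
    have hψ'' : ψ'' y = (κ:ℂ) * ψ y - ((q y:ℂ) / ((U y:ℂ) - c)) * ψ y := by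
      have h0 := hode y hy
      linear_combination h0
    have hF'y : F' y = (p y : ℂ) + (κ:ℂ) * (n y:ℂ) - ((q y:ℂ)/((U y:ℂ) - c)) * (n y : ℂ) := by
      rw [hF']
      simp only [hψ'']
      have e1 : ((p y : ℝ) : ℂ) = (starRingEnd ℂ) (ψ' y) * ψ' y := by
        rw [hp]; exact Complex.normSq_eq_conj_mul_self
      have e2 : ((n y : ℝ) : ℂ) = (starRingEnd ℂ) (ψ y) * ψ y := by
        rw [hn]; exact Complex.normSq_eq_conj_mul_self
      rw [e1, e2]; ring
    have hwre : ((U y : ℂ) - c).re = U y - c.re := by simp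
    have hwim : ((U y : ℂ) - c).im = -c.im := by simp
    have hdy : Complex.normSq ((U y : ℂ) - c) = d y := by rw [hd]
    constructor
    · rw [hF'y]
      simp only [Complex.sub_re, Complex.add_re, Complex.ofReal_re, Complex.mul_re,
        Complex.ofReal_im, Complex.div_re, Complex.div_im, hwre, hwim, hdy,
        Complex.sub_im, Complex.add_im, Complex.mul_im]
      ring
    · rw [hF'y]
      simp only [Complex.sub_im, Complex.add_im, Complex.ofReal_re, Complex.mul_im,
        Complex.ofReal_im, Complex.div_re, Complex.div_im, hwre, hwim, hdy,
        Complex.mul_re, Complex.add_re, Complex.sub_re]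
      ring
  -- FTC for real and imaginary parts
  have hFb : F b = 0 := by rw [hF]; simp [hbr]
  have hFa : F a = 0 := by rw [hF]; simp [hbl]
  have hre_int : IntervalIntegrable (fun y => (F' y).re) MeasureTheory.volume a b := by
    apply ContinuousOn.intervalIntegrable
    rw [huIcc]; exact Complex.continuous_re.comp_continuousOn hF'c
  have him_int : IntervalIntegrable (fun y => (F' y).im) MeasureTheory.volume a b := by
    apply ContinuousOn.intervalIntegrable
    rw [huIcc]; exact Complex.continuous_im.comp_continuousOn hF'c
  have E1 : ∫ y in a..b, (F' y).re = 0 := by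
    have := intervalIntegral.integral_eq_sub_of_hasDerivAt
      (f := fun y => (F y).re) (f' := fun y => (F' y).re)
      (fun y hy => (Complex.reCLM.hasFDerivAt.comp_hasDerivAt y (hFd y (huIcc ▸ hy))))
      hre_int
    rw [this]; simp [hFa, hFb]
  have E2 : ∫ y in a..b, (F' y).im = 0 := by
    have := intervalIntegral.integral_eq_sub_of_hasDerivAt
      (f := fun y => (F y).im) (f' := fun y => (F' y).im)
      (fun y hy => (Complex.imCLM.hasFDerivAt.comp_hasDerivAt y (hFd y (huIcc ▸ hy))))
      him_int
    rw [this]; simp [hFa, hFb]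
  -- integrability of the pieces
  have hdne : ∀ y ∈ Icc a b, d y ≠ 0 := fun y _ => (hdpos y).ne'
  have hBc : ContinuousOn (fun y => q y * (U y - c.re) / d y * n y) (Icc a b) :=
    (((hqc.mul (hUc.sub continuousOn_const)).div hdc hdne).mul hnc)
  have hCc : ContinuousOn (fun y => q y * n y / d y) (Icc a b) :=
    ((hqc.mul hnc).div hdc hdne)
  have hBint : IntervalIntegrable (fun y => q y * (U y - c.re) / d y * n y) MeasureTheory.volume a b := by
    apply ContinuousOn.intervalIntegrable; rw [huIcc]; exact hBc
  have hCint : IntervalIntegrable (fun y => q y * n y / d y) MeasureTheory.volume a b := by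
    apply ContinuousOn.intervalIntegrable; rw [huIcc]; exact hCc
  have hnint : IntervalIntegrable n MeasureTheory.volume a b := by
    apply ContinuousOn.intervalIntegrable; rw [huIcc]; exact hnc
  have hpint : IntervalIntegrable p MeasureTheory.volume a b := by
    apply ContinuousOn.intervalIntegrable; rw [huIcc]; exact hpc
  -- ∫ C = 0
  have hC0 : ∫ y in a..b, q y * n y / d y = 0 := by
    have e : ∫ y in a..b, (F' y).im = ∫ y in a..b, -(c.im * (q y * n y / d y)) := by
      apply intervalIntegral.integral_congr
      rw [huIcc]; intro y hy; exact (hkey y hy).2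
    rw [E2] at e
    rw [intervalIntegral.integral_neg, intervalIntegral.integral_const_mul] at e
    have : c.im * ∫ y in a..b, q y * n y / d y = 0 := by linarith [e]
    exact (mul_eq_zero.mp this).resolve_left hcim
  -- ∫ B = ∫ p + κ ∫ n
  have hB : ∫ y in a..b, q y * (U y - c.re) / d y * n y = (∫ y in a..b, p y) + κ * ∫ y in a..b, n y := by
    have e : ∫ y in a..b, (F' y).re
        = ∫ y in a..b, ((p y + κ * n y) - q y * (U y - c.re) / d y * n y) := by
      apply intervalIntegral.integral_congr
      rw [huIcc]; intro y hy
      have := (hkey y hy).1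
      simp only [this]
    rw [E1] at e
    rw [intervalIntegral.integral_sub (hpint.add (hnint.const_mul κ)) hBint,
      intervalIntegral.integral_add hpint (hnint.const_mul κ),
      intervalIntegral.integral_const_mul] at e
    linarith [e]
  -- the shifted integral J
  have hJ : ∫ y in a..b, q y * (U y - α) / d y * n y
      = (∫ y in a..b, p y) + κ * ∫ y in a..b, n y := by
    have e : (fun y => q y * (U y - α) / d y * n y)
        = fun y => q y * (U y - c.re) / d y * n y + (c.re - α) * (q y * n y / d y) := by
      funext y; ring
    rw [e, intervalIntegral.integral_add hBint (hCint.const_mul _),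
      intervalIntegral.integral_const_mul, hC0, hB]
    ring
  have hJle : ∫ y in a..b, q y * (U y - α) / d y * n y ≤ 0 := by
    have hneg : 0 ≤ ∫ y in a..b, -(q y * (U y - α) / d y * n y) := by
      apply intervalIntegral.integral_nonneg hab'
      intro u hu
      have h1 : q u * (U u - α) / d u ≤ 0 :=
        div_nonpos_iff.mpr (Or.inr ⟨hα u hu, (hdpos u).le⟩)
      have h2 : 0 ≤ n u := Complex.normSq_nonneg _
      have := mul_nonpos_iff.mpr (Or.inr ⟨h1, h2⟩)
      linarith
    rw [intervalIntegral.integral_neg] at hneg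
    linarith
  have hpnn : 0 ≤ ∫ y in a..b, p y :=
    intervalIntegral.integral_nonneg hab' (fun u _ => Complex.normSq_nonneg _)
  -- ∫ n > 0
  have hnpos : 0 < ∫ y in a..b, n y := by
    apply intervalIntegral.integral_pos hab hnc (fun x _ => Complex.normSq_nonneg _)
    exact ⟨y0, hy0, Complex.normSq_pos.mpr hψy0⟩
  have hkn : 0 < κ * ∫ y in a..b, n y := mul_pos hκ hnpos
  rw [hJ] at hJle
  linarith [hJle, hpnn, hkn]
end
end

section
/- (Charney–Stern condition, recovered from Theorem 1.) If the potential-vorticity gradient does not change sign, i.e. q(y) ≥ 0 for every y ∈ [−L/2, L/2] or q(y) ≤ 0 for every y ∈ [−L/2, L/2], then the flow is stable: for every wavenumber k ≥ 0 there is no unstable mode. -/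
/-
Multiply the mode equation by `ψ̄` and integrate by parts, using the Dirichlet conditions:
`∫ (q / (U - c)) |ψ|² = ∫ |ψ'|² + κ ∫ |ψ|²` with `κ = k² + 1/L_d² > 0`. Since
`Im (q / (U - c)) = Im c · q / |U - c|²` and `Im c ≠ 0`, the imaginary part gives
`∫ q |ψ|² / |U - c|² = 0`; a one-signed continuous integrand with zero integral vanishes, so
`q ψ ≡ 0`. The mode equation then reads `ψ'' = κ ψ`, and the real part of the same identity,
`κ ∫ |ψ|² = -∫ |ψ'|² ≤ 0`, forces `ψ ≡ 0`.
-/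

open Set

noncomputable section

open MeasureTheory ComplexConjugate

theorem eqOn_zero_of_integral_eq_zero {f : ℝ → ℝ} {a b : ℝ} (hab : a < b)
    (hf : ContinuousOn f (Icc a b))
    (hsign : (∀ x ∈ Icc a b, 0 ≤ f x) ∨ (∀ x ∈ Icc a b, f x ≤ 0))
    (hint : ∫ x in a..b, f x = 0) : EqOn f 0 (Icc a b) := by
  wlog hnonneg : ∀ x ∈ Icc a b, 0 ≤ f x generalizing f
  · have hnonpos := hsign.resolve_left hnonneg
    intro x hx
    simpa using this hf.neg (Or.inl fun y hy => neg_nonneg.2 (hnonpos y hy))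
      (by simp [intervalIntegral.integral_neg, hint]) (fun y hy => neg_nonneg.2 (hnonpos y hy)) hx
  intro x hx
  by_contra hne
  exact (intervalIntegral.integral_pos hab hf (fun y hy => hnonneg y (Ioc_subset_Icc_self hy))
    ⟨x, hx, (hnonneg x hx).lt_of_ne (Ne.symm hne)⟩).ne' hint

section Dirichlet

variable {a b : ℝ} {ψ ψ' ψ'' V : ℝ → ℂ}
  (hψ : ∀ y ∈ Icc a b, HasDerivAt ψ (ψ' y) y) (hψ' : ∀ y ∈ Icc a b, HasDerivAt ψ' (ψ'' y) y)
  (ha : ψ a = 0) (hb : ψ b = 0)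
include hψ hψ' ha hb

theorem integral_mul_normSq_eq_neg_integral_normSq_deriv (hab : a ≤ b)
    (hV : ContinuousOn V (Icc a b)) (heq : ∀ y ∈ Icc a b, ψ'' y = V y * ψ y) :
    ∫ y in a..b, V y * Complex.normSq (ψ y) = -∫ y in a..b, (Complex.normSq (ψ' y) : ℂ) := by
  have hderiv : ∀ y ∈ uIcc a b, HasDerivAt (fun y => ψ' y * conj (ψ y))
      (V y * Complex.normSq (ψ y) + Complex.normSq (ψ' y)) y := by
    intro y hy
    rw [uIcc_of_le hab] at hy
    refine ((hψ' y hy).mul (hψ y hy).star).congr_deriv ?_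
    rw [heq y hy, ← Complex.mul_conj, ← Complex.mul_conj, Complex.star_def]
    ring
  have hψc := HasDerivAt.continuousOn hψ
  have hψ'c := HasDerivAt.continuousOn hψ'
  have hint₁ : IntervalIntegrable (fun y => V y * Complex.normSq (ψ y)) volume a b :=
    ContinuousOn.intervalIntegrable_of_Icc hab (by fun_prop)
  have hint₂ : IntervalIntegrable (fun y => (Complex.normSq (ψ' y) : ℂ)) volume a b :=
    ContinuousOn.intervalIntegrable_of_Icc hab (by fun_prop)
  have hftc := intervalIntegral.integral_eq_sub_of_hasDerivAt hderiv (hint₁.add hint₂)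
  rw [intervalIntegral.integral_add hint₁ hint₂, ha, hb] at hftc
  simpa [eq_neg_iff_add_eq_zero] using hftc

theorem integral_im_mul_normSq_eq_zero (hab : a ≤ b)
    (hV : ContinuousOn V (Icc a b)) (heq : ∀ y ∈ Icc a b, ψ'' y = V y * ψ y) :
    ∫ y in a..b, (V y).im * Complex.normSq (ψ y) = 0 := by
  have hψc := HasDerivAt.continuousOn hψ
  have hint : IntervalIntegrable (fun y => V y * Complex.normSq (ψ y)) volume a b :=
    ContinuousOn.intervalIntegrable_of_Icc hab (by fun_prop)
  have him := congrArg Complex.im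
    (integral_mul_normSq_eq_neg_integral_normSq_deriv hψ hψ' ha hb hab hV heq)
  rw [← Complex.imCLM_apply, ← ContinuousLinearMap.intervalIntegral_comp_comm _ hint,
    intervalIntegral.integral_ofReal] at him
  simpa using him

theorem eqOn_zero_of_deriv_deriv_eq_mul {κ : ℝ} (hab : a < b) (hκ : 0 < κ)
    (heq : ∀ y ∈ Icc a b, ψ'' y = κ * ψ y) : EqOn ψ 0 (Icc a b) := by
  have henergy := integral_mul_normSq_eq_neg_integral_normSq_deriv hψ hψ' ha hb hab.le
    continuousOn_const heq
  simp only [← Complex.ofReal_mul, intervalIntegral.integral_ofReal,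
    intervalIntegral.integral_const_mul] at henergy
  have hnonneg : ∀ y ∈ Icc a b, 0 ≤ Complex.normSq (ψ y) := fun y _ => Complex.normSq_nonneg _
  have hzero : ∫ y in a..b, Complex.normSq (ψ y) = 0 := by
    have h₁ : 0 ≤ ∫ y in a..b, Complex.normSq (ψ y) :=
      intervalIntegral.integral_nonneg hab.le hnonneg
    have h₂ : 0 ≤ ∫ y in a..b, Complex.normSq (ψ' y) :=
      intervalIntegral.integral_nonneg hab.le fun y _ => Complex.normSq_nonneg (ψ' y)
    have : κ * ∫ y in a..b, Complex.normSq (ψ y) = -∫ y in a..b, Complex.normSq (ψ' y) := by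
      exact_mod_cast henergy
    nlinarith
  intro y hy
  have hψc := HasDerivAt.continuousOn hψ
  exact Complex.normSq_eq_zero.1
    (eqOn_zero_of_integral_eq_zero hab (by fun_prop) (Or.inl hnonneg) hzero hy)

end Dirichlet

theorem IsUnstableMode.ofReal_mul_eq_zero {L Ld k : ℝ} {U q : ℝ → ℝ} {c : ℂ}
    {ψ ψ' ψ'' : ℝ → ℂ} (hmode : IsUnstableMode L Ld k U q c ψ ψ' ψ'') (hL : 0 < L)
    (hU : ContinuousOn U (Icc (-L/2) (L/2))) (hq : ContinuousOn q (Icc (-L/2) (L/2)))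
    (hsign : (∀ y ∈ Icc (-L/2) (L/2), 0 ≤ q y) ∨ (∀ y ∈ Icc (-L/2) (L/2), q y ≤ 0)) :
    ∀ y ∈ Icc (-L/2) (L/2), (q y : ℂ) * ψ y = 0 := by
  obtain ⟨hc, hψ, hψ', -, -, ha, hb, heq⟩ := hmode
  have hUc : ∀ y, (U y : ℂ) - c ≠ 0 := fun y h => hc (by simpa using congrArg Complex.im h)
  have hψc : ContinuousOn ψ (Icc (-L/2) (L/2)) := HasDerivAt.continuousOn hψ
  set V : ℝ → ℂ := fun y => ((k^2 + 1/Ld^2 : ℝ) : ℂ) - q y / (U y - c)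
  have hV : ContinuousOn V (Icc (-L/2) (L/2)) := by
    refine continuousOn_const.sub (ContinuousOn.div ?_ ?_ fun y _ => hUc y) <;> fun_prop
  set g : ℝ → ℝ := fun y => q y * Complex.normSq (ψ y) / Complex.normSq (U y - c)
  have hVg : ∀ y, (V y).im * Complex.normSq (ψ y) = -c.im * g y := by
    intro y
    simp only [V, g, Complex.sub_im, Complex.ofReal_im, Complex.div_im, Complex.ofReal_re]
    ring
  have hg : ∫ y in (-L/2)..(L/2), g y = 0 := by
    have him := integral_im_mul_normSq_eq_zero hψ hψ' ha hb (by linarith) hV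
      (fun y hy => by linear_combination heq y hy)
    simp only [hVg, intervalIntegral.integral_const_mul, mul_eq_zero, neg_eq_zero] at him
    exact him.resolve_left hc
  have hgc : ContinuousOn g (Icc (-L/2) (L/2)) :=
    ContinuousOn.div (by fun_prop) (by fun_prop) fun y _ => (Complex.normSq_pos.2 (hUc y)).ne'
  have hgsign : (∀ y ∈ Icc (-L/2) (L/2), 0 ≤ g y) ∨ (∀ y ∈ Icc (-L/2) (L/2), g y ≤ 0) :=
    hsign.imp
      (fun h y hy => div_nonneg (mul_nonneg (h y hy) (Complex.normSq_nonneg _))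
        (Complex.normSq_nonneg _))
      (fun h y hy => div_nonpos_of_nonpos_of_nonneg
        (mul_nonpos_of_nonpos_of_nonneg (h y hy) (Complex.normSq_nonneg _))
        (Complex.normSq_nonneg _))
  intro y hy
  have hgy := eqOn_zero_of_integral_eq_zero (by linarith) hgc hgsign hg hy
  simp only [g, Pi.zero_apply, div_eq_zero_iff, mul_eq_zero, Complex.normSq_eq_zero] at hgy
  rcases hgy with (hqy | hψy) | hUy
  · simp [hqy]
  · simp [hψy]
  · exact absurd hUy (hUc y)

/-- Charney–Stern condition: if the PV gradient `q` does not change sign on the channel,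
then the flow is stable. -/
theorem charney_stern
    (L Ld : ℝ) (hL : 0 < L) (hLd : 0 < Ld)
    (U q : ℝ → ℝ)
    (hU : ContDiffOn ℝ 1 U (Icc (-L/2) (L/2)))
    (hq : ContDiffOn ℝ 1 q (Icc (-L/2) (L/2)))
    (hsign : (∀ y ∈ Icc (-L/2) (L/2), 0 ≤ q y) ∨ (∀ y ∈ Icc (-L/2) (L/2), q y ≤ 0)) :
    ∀ k : ℝ, 0 ≤ k → ∀ (c : ℂ) (ψ ψ' ψ'' : ℝ → ℂ),
      ¬ IsUnstableMode L Ld k U q c ψ ψ' ψ'' := by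
  intro k _ c ψ ψ' ψ'' hmode
  have hqψ := hmode.ofReal_mul_eq_zero hL hU.continuousOn hq.continuousOn hsign
  obtain ⟨-, hψ, hψ', -, ⟨y₀, hy₀, hψy₀⟩, ha, hb, heq⟩ := hmode
  have hψ'' : ∀ y ∈ Icc (-L/2) (L/2), ψ'' y = ((k^2 + 1/Ld^2 : ℝ) : ℂ) * ψ y := by
    intro y hy
    have hy_eq := heq y hy
    rw [div_mul_eq_mul_div, hqψ y hy, zero_div] at hy_eq
    linear_combination hy_eq
  exact hψy₀ (eqOn_zero_of_deriv_deriv_eq_mul hψ hψ' ha hb (by linarith) (by positivity) hψ'' hy₀)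
end
end

section
/- (Inequality (aint) of Appendix A.) Let k ≥ 0 and let (c, ψ) be an unstable mode, with c_r = Re c. Then for every real number α, ∫_{−L/2}^{L/2} q(y)·(U(y) − 2c_r + α)/|U(y) − c|² · |ψ(y)|² dy = ∫_{−L/2}^{L/2} ( |ψ′(y)|² + (k² + 1/L_d²)|ψ(y)|² ) dy ≥ (κ₀² + k²) ∫_{−L/2}^{L/2} |ψ(y)|² dy. -/
open Set

noncomputable section

/-!
Multiplying the mode equation by `ψ̄` and integrating by parts gives the complex identity
`∫ q/(U - c) |ψ|² = ∫ |ψ'|² + (k² + 1/L_d²) ∫ |ψ|²`. For real `β`, the real part of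
`(1 - iβ) · q/(U - c)` is `q (U - c_r + β c_i)/|U - c|²`; choosing `β = (α - c_r)/c_i` turns it
into the weight of the theorem, and the right-hand side, being real, is unchanged.

The lower bound is Wirtinger's inequality `(π/L)² ∫ |ψ|² ≤ ∫ |ψ'|²` for `ψ` vanishing at both
ends. For `κ (b - a) < π` the function `T = κ tan (κ (y - m))`, `m` the midpoint, is smooth on
`[a, b]` and satisfies `T' = κ² + T²`, so `|ψ' + T ψ|² = |ψ'|² - κ² |ψ|² + (T |ψ|²)'`; integrating,
the boundary term vanishes with `ψ`. Letting `κ → π/(b - a)` gives the sharp constant.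
-/

open Real Filter Topology MeasureTheory ComplexConjugate

section Wirtinger

variable {E : Type*} [NormedAddCommGroup E] [InnerProductSpace ℝ E] {a b : ℝ} {ψ ψ' : ℝ → E}

theorem hasDerivAt_mul_tan_mul_sub (κ m : ℝ) {y : ℝ} (hy : cos (κ * (y - m)) ≠ 0) :
    HasDerivAt (fun x => κ * tan (κ * (x - m))) (κ ^ 2 + (κ * tan (κ * (y - m))) ^ 2) y := by
  have h := ((hasDerivAt_tan hy).comp y (((hasDerivAt_id y).sub_const m).const_mul κ)).const_mul κ
  refine h.congr_deriv ?_
  rw [one_div, ← inv_one_add_tan_sq hy, inv_inv]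
  ring

theorem sq_mul_integral_norm_sq_le_of_mul_lt_pi {κ : ℝ} (hab : a ≤ b) (hκ : 0 ≤ κ)
    (hκπ : κ * (b - a) < π) (hψ : ∀ y ∈ Icc a b, HasDerivAt ψ (ψ' y) y)
    (hψ' : ContinuousOn ψ' (Icc a b)) (ha : ψ a = 0) (hb : ψ b = 0) :
    κ ^ 2 * ∫ y in a..b, ‖ψ y‖ ^ 2 ≤ ∫ y in a..b, ‖ψ' y‖ ^ 2 := by
  set m := (a + b) / 2 with hm
  set T : ℝ → ℝ := fun y => κ * tan (κ * (y - m))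
  have hcos : ∀ y ∈ Icc a b, cos (κ * (y - m)) ≠ 0 := fun y hy => by
    have : |κ * (y - m)| ≤ κ * ((b - a) / 2) := by
      rw [abs_mul, abs_of_nonneg hκ]
      exact mul_le_mul_of_nonneg_left (abs_sub_le_iff.2 ⟨by linarith [hy.2], by linarith [hy.1]⟩) hκ
    exact (cos_pos_of_mem_Ioo (abs_lt.1 (by linarith))).ne'
  have hT : ∀ y ∈ Icc a b, HasDerivAt T (κ ^ 2 + T y ^ 2) y := fun y hy =>
    hasDerivAt_mul_tan_mul_sub κ m (hcos y hy)
  set B' : ℝ → ℝ := fun y => (κ ^ 2 + T y ^ 2) * ‖ψ y‖ ^ 2 + T y * (2 * inner ℝ (ψ y) (ψ' y))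
  have hB : ∀ y ∈ uIcc a b, HasDerivAt (fun y => T y * ‖ψ y‖ ^ 2) (B' y) y := by
    rw [uIcc_of_le hab]
    exact fun y hy => (hT y hy).mul (hψ y hy).norm_sq
  have hψc : ContinuousOn ψ (Icc a b) := fun y hy => (hψ y hy).continuousAt.continuousWithinAt
  have hTc : ContinuousOn T (Icc a b) := fun y hy => (hT y hy).continuousAt.continuousWithinAt
  have hint : ∀ {f : ℝ → ℝ}, ContinuousOn f (Icc a b) → IntervalIntegrable f volume a b :=
    fun hf => (uIcc_of_le hab ▸ hf).intervalIntegrable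
  have hψ'int : IntervalIntegrable (fun y => ‖ψ' y‖ ^ 2) volume a b := hint (by fun_prop)
  have hB'int : IntervalIntegrable B' volume a b := hint (by fun_prop)
  have hsq : ∀ y ∈ Icc a b, κ ^ 2 * ‖ψ y‖ ^ 2 ≤ ‖ψ' y‖ ^ 2 + B' y := fun y _ => by
    have := norm_add_sq_real (ψ' y) (T y • ψ y)
    rw [norm_smul, inner_smul_right, real_inner_comm, Real.norm_eq_abs, mul_pow, sq_abs] at this
    nlinarith [sq_nonneg ‖ψ' y + T y • ψ y‖]
  calc κ ^ 2 * ∫ y in a..b, ‖ψ y‖ ^ 2 = ∫ y in a..b, κ ^ 2 * ‖ψ y‖ ^ 2 :=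
        (intervalIntegral.integral_const_mul _ _).symm
    _ ≤ ∫ y in a..b, (‖ψ' y‖ ^ 2 + B' y) :=
        intervalIntegral.integral_mono_on hab ((hint (by fun_prop)).const_mul _)
          (hψ'int.add hB'int) hsq
    _ = ∫ y in a..b, ‖ψ' y‖ ^ 2 := by
        rw [intervalIntegral.integral_add hψ'int hB'int,
          intervalIntegral.integral_eq_sub_of_hasDerivAt hB hB'int]
        simp [ha, hb]

theorem sq_pi_div_mul_integral_norm_sq_le (hab : a < b)
    (hψ : ∀ y ∈ Icc a b, HasDerivAt ψ (ψ' y) y) (hψ' : ContinuousOn ψ' (Icc a b))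
    (ha : ψ a = 0) (hb : ψ b = 0) :
    (π / (b - a)) ^ 2 * ∫ y in a..b, ‖ψ y‖ ^ 2 ≤ ∫ y in a..b, ‖ψ' y‖ ^ 2 := by
  have hlim : Tendsto (fun κ : ℝ => κ ^ 2 * ∫ y in a..b, ‖ψ y‖ ^ 2) (𝓝[<] (π / (b - a)))
      (𝓝 ((π / (b - a)) ^ 2 * ∫ y in a..b, ‖ψ y‖ ^ 2)) :=
    ((continuous_pow 2).mul continuous_const).continuousAt.tendsto.mono_left nhdsWithin_le_nhds
  refine le_of_tendsto hlim ?_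
  filter_upwards [Ioo_mem_nhdsLT (div_pos pi_pos (sub_pos.2 hab))] with κ hκ
  exact sq_mul_integral_norm_sq_le_of_mul_lt_pi hab.le hκ.1.le
    ((lt_div_iff₀ (sub_pos.2 hab)).1 hκ.2) hψ hψ' ha hb

end Wirtinger

theorem integral_conj_mul_deriv_deriv_eq_neg {a b : ℝ} {ψ ψ' ψ'' : ℝ → ℂ}
    (hψ : ∀ y ∈ uIcc a b, HasDerivAt ψ (ψ' y) y) (hψ' : ∀ y ∈ uIcc a b, HasDerivAt ψ' (ψ'' y) y)
    (hψ'' : IntervalIntegrable ψ'' volume a b) (ha : ψ a = 0) (hb : ψ b = 0) :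
    ∫ y in a..b, conj (ψ y) * ψ'' y = -∫ y in a..b, (Complex.normSq (ψ' y) : ℂ) := by
  have hψ'c : ContinuousOn ψ' (uIcc a b) := fun y hy => (hψ' y hy).continuousAt.continuousWithinAt
  rw [intervalIntegral.integral_mul_deriv_eq_deriv_mul (u := fun y => conj (ψ y))
    (fun y hy => (hψ y hy).star) hψ' (hψ'c.star).intervalIntegrable hψ'']
  simp [ha, hb, Complex.normSq_eq_conj_mul_self]

theorem mul_sub_two_re_add_div_normSq_eq_re (q u α : ℝ) {c : ℂ} (hc : c.im ≠ 0) :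
    q * (u - 2 * c.re + α) / Complex.normSq (u - c)
      = ((1 - ((α - c.re) / c.im : ℝ) * Complex.I) * (q / (u - c))).re := by
  have : Complex.normSq (u - c) ≠ 0 := by
    rw [Ne, Complex.normSq_eq_zero]
    intro h
    apply hc
    simpa using congrArg Complex.im h
  simp only [Complex.mul_re, Complex.div_re, Complex.div_im, Complex.sub_re, Complex.sub_im,
    Complex.ofReal_re, Complex.ofReal_im, Complex.I_re, Complex.I_im, Complex.one_re,
    Complex.one_im, Complex.mul_im]
  field_simp
  ring

namespace IsUnstableMode

variable {L Ld k : ℝ} {U q : ℝ → ℝ} {c : ℂ} {ψ ψ' ψ'' : ℝ → ℂ}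

theorem continuousOn (h : IsUnstableMode L Ld k U q c ψ ψ' ψ'') :
    ContinuousOn ψ (Icc (-L/2) (L/2)) := fun y hy =>
  (h.2.1 y hy).continuousAt.continuousWithinAt

theorem continuousOn_deriv (h : IsUnstableMode L Ld k U q c ψ ψ' ψ'') :
    ContinuousOn ψ' (Icc (-L/2) (L/2)) := fun y hy =>
  (h.2.2.1 y hy).continuousAt.continuousWithinAt

theorem div_mul_normSq_eq (h : IsUnstableMode L Ld k U q c ψ ψ' ψ'') {y : ℝ}
    (hy : y ∈ Icc (-L/2) (L/2)) :
    (q y : ℂ) / (U y - c) * Complex.normSq (ψ y)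
      = ((k^2 + 1/Ld^2 : ℝ) : ℂ) * Complex.normSq (ψ y) - conj (ψ y) * ψ'' y := by
  rw [Complex.normSq_eq_conj_mul_self]
  linear_combination conj (ψ y) * h.2.2.2.2.2.2.2 y hy

theorem integral_energy_eq (hL : 0 ≤ L) (h : IsUnstableMode L Ld k U q c ψ ψ' ψ'') :
    ∫ y in (-L/2)..(L/2), Complex.normSq (ψ' y) + (k^2 + 1/Ld^2) * Complex.normSq (ψ y)
      = (∫ y in (-L/2)..(L/2), Complex.normSq (ψ' y))
        + (k^2 + 1/Ld^2) * ∫ y in (-L/2)..(L/2), Complex.normSq (ψ y) := by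
  have hIcc : uIcc (-L/2) (L/2) = Icc (-L/2) (L/2) := uIcc_of_le (by linarith)
  have hψ := hIcc ▸ h.continuousOn
  have hψ' := hIcc ▸ h.continuousOn_deriv
  rw [intervalIntegral.integral_add (ContinuousOn.intervalIntegrable (by fun_prop))
    (ContinuousOn.intervalIntegrable (by fun_prop)), intervalIntegral.integral_const_mul]

theorem integral_weighted_eq (hL : 0 ≤ L) (h : IsUnstableMode L Ld k U q c ψ ψ' ψ'') (α : ℝ) :
    ∫ y in (-L/2)..(L/2),
        q y * (U y - 2 * c.re + α) / Complex.normSq ((U y : ℂ) - c) * Complex.normSq (ψ y)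
      = ∫ y in (-L/2)..(L/2), Complex.normSq (ψ' y) + (k^2 + 1/Ld^2) * Complex.normSq (ψ y) := by
  have ⟨hc, hψd, hψ'd, hψ''c, _, ha, hb, _⟩ := h
  have hIcc : uIcc (-L/2) (L/2) = Icc (-L/2) (L/2) := uIcc_of_le (by linarith)
  have hψ := hIcc ▸ h.continuousOn
  have hψ'' := hIcc ▸ hψ''c
  have hN : IntervalIntegrable (fun y => (Complex.normSq (ψ y) : ℂ)) volume (-L/2) (L/2) :=
    ContinuousOn.intervalIntegrable (by fun_prop)
  have hP : IntervalIntegrable (fun y => conj (ψ y) * ψ'' y) volume (-L/2) (L/2) :=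
    ContinuousOn.intervalIntegrable (by fun_prop)
  set G : ℝ → ℂ := fun y => ((k^2 + 1/Ld^2 : ℝ) : ℂ) * Complex.normSq (ψ y) - conj (ψ y) * ψ'' y
  have hG : ∫ y in (-L/2)..(L/2), G y = ((∫ y in (-L/2)..(L/2),
      Complex.normSq (ψ' y) + (k^2 + 1/Ld^2) * Complex.normSq (ψ y) : ℝ) : ℂ) := by
    rw [intervalIntegral.integral_sub (hN.const_mul _) hP, intervalIntegral.integral_const_mul,
      integral_conj_mul_deriv_deriv_eq_neg (hIcc ▸ hψd) (hIcc ▸ hψ'd) hψ''.intervalIntegrable ha hb,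
      h.integral_energy_eq hL, intervalIntegral.integral_ofReal, intervalIntegral.integral_ofReal]
    push_cast
    ring
  set w : ℂ := 1 - ((α - c.re) / c.im : ℝ) * Complex.I
  calc _ = ∫ y in (-L/2)..(L/2), (w * G y).re := intervalIntegral.integral_congr fun y hy => by
        rw [mul_sub_two_re_add_div_normSq_eq_re _ _ _ hc, ← Complex.re_mul_ofReal, mul_assoc,
          h.div_mul_normSq_eq (hIcc ▸ hy)]
    _ = (w * ∫ y in (-L/2)..(L/2), G y).re := by
        rw [← intervalIntegral.integral_const_mul]
        exact intervalIntegral.intervalIntegral_re (((hN.const_mul _).sub hP).const_mul w)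
    _ = _ := by rw [hG, Complex.re_mul_ofReal]; simp [w]

end IsUnstableMode

open MeasureTheory intervalIntegral in
theorem integral_inequality_aint_general
    (L Ld : ℝ) (hL : 0 < L)
    (U q : ℝ → ℝ)
    (k : ℝ) (c : ℂ) (ψ ψ' ψ'' : ℝ → ℂ)
    (hmode : IsUnstableMode L Ld k U q c ψ ψ' ψ'') :
    ∀ α : ℝ,
      (∫ y in (-L/2)..(L/2),
          q y * (U y - 2 * c.re + α) / Complex.normSq ((U y : ℂ) - c) * Complex.normSq (ψ y))
        = (∫ y in (-L/2)..(L/2),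
            Complex.normSq (ψ' y) + (k^2 + 1/Ld^2) * Complex.normSq (ψ y)) ∧
      ((Real.pi^2/L^2 + 1/Ld^2) + k^2) * (∫ y in (-L/2)..(L/2), Complex.normSq (ψ y))
        ≤ ∫ y in (-L/2)..(L/2),
            Complex.normSq (ψ' y) + (k^2 + 1/Ld^2) * Complex.normSq (ψ y) := by
  intro α
  refine ⟨hmode.integral_weighted_eq hL.le α, ?_⟩
  have ⟨_, hψ, _, _, _, ha, hb, _⟩ := hmode
  have hwirt := sq_pi_div_mul_integral_norm_sq_le (by linarith) hψ hmode.continuousOn_deriv ha hb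
  simp only [← Complex.normSq_eq_norm_sq, show L / 2 - -L / 2 = L by ring, div_pow] at hwirt
  rw [hmode.integral_energy_eq hL.le]
  linarith

open MeasureTheory intervalIntegral in
/-- Inequality (aint) of Appendix A: for any unstable mode (with `c_r = Re c`) and any
real `α`, `∫ q (U − 2c_r + α)/|U − c|² |ψ|² = ∫ (|ψ'|² + (k² + 1/L_d²)|ψ|²)
≥ (κ₀² + k²) ∫ |ψ|²`, where `κ₀² = π²/L² + 1/L_d²`. -/
theorem integral_inequality_aint
    (L Ld : ℝ) (hL : 0 < L) (hLd : 0 < Ld)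
    (U q : ℝ → ℝ)
    (hU : ContDiffOn ℝ 1 U (Icc (-L/2) (L/2)))
    (hq : ContDiffOn ℝ 1 q (Icc (-L/2) (L/2)))
    (k : ℝ) (hk : 0 ≤ k) (c : ℂ) (ψ ψ' ψ'' : ℝ → ℂ)
    (hmode : IsUnstableMode L Ld k U q c ψ ψ' ψ'') :
    ∀ α : ℝ,
      (∫ y in (-L/2)..(L/2),
          q y * (U y - 2 * c.re + α) / Complex.normSq ((U y : ℂ) - c) * Complex.normSq (ψ y))
        = (∫ y in (-L/2)..(L/2),
            Complex.normSq (ψ' y) + (k^2 + 1/Ld^2) * Complex.normSq (ψ y)) ∧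
      ((Real.pi^2/L^2 + 1/Ld^2) + k^2) * (∫ y in (-L/2)..(L/2), Complex.normSq (ψ y))
        ≤ ∫ y in (-L/2)..(L/2),
            Complex.normSq (ψ' y) + (k^2 + 1/Ld^2) * Complex.normSq (ψ y) :=
  integral_inequality_aint_general L Ld hL U q k c ψ ψ' ψ'' hmode
end
end

section
/- (Structure and uniqueness for Class (i) flows, Section 3.1.) Suppose the standing assumptions hold and (α, m) satisfies the Class (i) conditions. Then: (a) the set of critical latitudes {y ∈ Ω : q(y) = 0} coincides with the set of nodes {y ∈ Ω : U(y) = α}; (b) m(y) ≠ 0 for every y ∈ Ω; (c) min U < α < max U on [−L/2, L/2]; and (d) α is unique, i.e. if (α′, m′) also satisfies the Class (i) conditions then α′ = α. -/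
open Set Filter Topology

noncomputable section

private lemma slope_mul (q : ℝ → ℝ) (y z : ℝ) (hq0 : q y = 0) (hz : z ≠ y) :
    q z = slope q y z * (z - y) := by
  rw [slope_def_field, hq0, sub_zero, div_mul_cancel₀]
  exact sub_ne_zero.mpr hz

private lemma exists_pos_right (a b y d : ℝ) (q : ℝ → ℝ) (hy : y ∈ Ioo a b)
    (hq0 : q y = 0) (hd : HasDerivAt q d y) (hdpos : 0 < d)
    (s : Set ℝ) (hs : s ∈ 𝓝 y) :
    ∃ z ∈ s ∩ Ioo a b, 0 < q z := by
  have hslope := hasDerivAt_iff_tendsto_slope.mp hd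
  have h1 : ∀ᶠ z in 𝓝[≠] y, 0 < slope q y z := hslope (Ioi_mem_nhds hdpos)
  have hmono : 𝓝[>] y ≤ 𝓝[≠] y := nhdsWithin_mono y fun z hz => ne_of_gt hz
  have h2 : ∀ᶠ z in 𝓝[>] y, 0 < slope q y z := h1.filter_mono hmono
  have h3 : ∀ᶠ z in 𝓝[>] y, z ∈ s := mem_nhdsWithin_of_mem_nhds hs
  have h4 : ∀ᶠ z in 𝓝[>] y, z ∈ Ioo a b :=
    mem_nhdsWithin_of_mem_nhds (isOpen_Ioo.mem_nhds hy)
  have h5 : ∀ᶠ z in 𝓝[>] y, z ∈ Ioi y := self_mem_nhdsWithin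
  obtain ⟨z, hz1, hz2, hz3, hz4⟩ := (h2.and (h3.and (h4.and h5))).exists
  refine ⟨z, ⟨hz2, hz3⟩, ?_⟩
  rw [slope_mul q y z hq0 (ne_of_gt hz4)]
  exact mul_pos hz1 (sub_pos.mpr hz4)

private lemma exists_neg_left (a b y d : ℝ) (q : ℝ → ℝ) (hy : y ∈ Ioo a b)
    (hq0 : q y = 0) (hd : HasDerivAt q d y) (hdpos : 0 < d)
    (s : Set ℝ) (hs : s ∈ 𝓝 y) :
    ∃ z ∈ s ∩ Ioo a b, q z < 0 := by
  have hslope := hasDerivAt_iff_tendsto_slope.mp hd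
  have h1 : ∀ᶠ z in 𝓝[≠] y, 0 < slope q y z := hslope (Ioi_mem_nhds hdpos)
  have hmono : 𝓝[<] y ≤ 𝓝[≠] y := nhdsWithin_mono y fun z hz => ne_of_lt hz
  have h2 : ∀ᶠ z in 𝓝[<] y, 0 < slope q y z := h1.filter_mono hmono
  have h3 : ∀ᶠ z in 𝓝[<] y, z ∈ s := mem_nhdsWithin_of_mem_nhds hs
  have h4 : ∀ᶠ z in 𝓝[<] y, z ∈ Ioo a b :=
    mem_nhdsWithin_of_mem_nhds (isOpen_Ioo.mem_nhds hy)
  have h5 : ∀ᶠ z in 𝓝[<] y, z ∈ Iio y := self_mem_nhdsWithin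
  obtain ⟨z, hz1, hz2, hz3, hz4⟩ := (h2.and (h3.and (h4.and h5))).exists
  refine ⟨z, ⟨hz2, hz3⟩, ?_⟩
  rw [slope_mul q y z hq0 (ne_of_lt hz4)]
  exact mul_neg_of_pos_of_neg hz1 (sub_neg.mpr hz4)

private lemma signs_near (a b y d : ℝ) (q : ℝ → ℝ) (hy : y ∈ Ioo a b)
    (hq0 : q y = 0) (hd : HasDerivAt q d y) (hd0 : d ≠ 0)
    (s : Set ℝ) (hs : s ∈ 𝓝 y) :
    (∃ z ∈ s ∩ Ioo a b, 0 < q z) ∧ (∃ z ∈ s ∩ Ioo a b, q z < 0) := by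
  rcases hd0.lt_or_gt with h | h
  · have hd' : HasDerivAt (fun z => -q z) (-d) y := hd.neg
    have hq0' : (fun z => -q z) y = 0 := by simp [hq0]
    obtain ⟨z1, hz1, hz1'⟩ :=
      exists_neg_left a b y (-d) (fun z => -q z) hy hq0' hd' (by linarith) s hs
    obtain ⟨z2, hz2, hz2'⟩ :=
      exists_pos_right a b y (-d) (fun z => -q z) hy hq0' hd' (by linarith) s hs
    exact ⟨⟨z1, hz1, by simpa using hz1'⟩, ⟨z2, hz2, by simpa using hz2'⟩⟩
  · exact ⟨exists_pos_right a b y d q hy hq0 hd h s hs,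
      exists_neg_left a b y d q hy hq0 hd h s hs⟩

private lemma node_of_zero (a b κ α : ℝ) (hκ : 0 < κ) (U q m : ℝ → ℝ)
    (hm : ∀ y ∈ Icc a b, κ * m y * (U y - α) = q y)
    (hsgn : (∀ y ∈ Icc a b, 0 ≤ m y) ∨ (∀ y ∈ Icc a b, m y ≤ 0))
    (y : ℝ) (hy : y ∈ Ioo a b) (hq0 : q y = 0)
    (d : ℝ) (hd : HasDerivAt q d y) (hd0 : d ≠ 0)
    (hUc : ContinuousAt U y) : U y = α := by
  by_contra hne
  set s : Set ℝ := {z | 0 < (U z - α) * (U y - α)} with hsdef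
  have hsnhds : s ∈ 𝓝 y := by
    have hc : ContinuousAt (fun z => (U z - α) * (U y - α)) y :=
      (hUc.sub continuousAt_const).mul continuousAt_const
    have h0 : 0 < (U y - α) * (U y - α) :=
      mul_self_pos.mpr (sub_ne_zero.mpr hne)
    exact hc (Ioi_mem_nhds h0)
  obtain ⟨⟨zp, ⟨hzps, hzpI⟩, hzp⟩, zn, ⟨hzns, hznI⟩, hzn⟩ :=
    signs_near a b y d q hy hq0 hd hd0 s hsnhds
  have hqp := hm zp (Ioo_subset_Icc_self hzpI)
  have hqn := hm zn (Ioo_subset_Icc_self hznI)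
  have hzps' : 0 < (U zp - α) * (U y - α) := hzps
  have hzns' : 0 < (U zn - α) * (U y - α) := hzns
  rcases lt_or_gt_of_ne (sub_ne_zero.mpr hne) with hUy | hUy
  · -- U y - α < 0 : U z - α < 0 on s
    have hp : U zp - α < 0 := by nlinarith
    have hn : U zn - α < 0 := by nlinarith
    rcases hsgn with hpos | hneg
    · have := hpos zp (Ioo_subset_Icc_self hzpI)
      nlinarith [mul_nonneg hκ.le this]
    · have := hneg zn (Ioo_subset_Icc_self hznI)
      nlinarith [mul_nonpos_of_nonneg_of_nonpos hκ.le this]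
  · have hp : 0 < U zp - α := by nlinarith
    have hn : 0 < U zn - α := by nlinarith
    rcases hsgn with hpos | hneg
    · have := hpos zn (Ioo_subset_Icc_self hznI)
      nlinarith [mul_nonneg hκ.le this]
    · have := hneg zp (Ioo_subset_Icc_self hzpI)
      nlinarith [mul_nonpos_of_nonneg_of_nonpos hκ.le this]

/-- Structure and uniqueness for Class (i) flows (Section 3.1): the critical latitudes
coincide with the zonal-wind nodes, `m` never vanishes in the open channel, `α` lies
strictly between the extrema of `U`, and the Class (i) shift `α` is unique. -/
theorem class_one_structure
    (L Ld : ℝ) (hL : 0 < L) (hLd : 0 < Ld)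
    (U q U' q' : ℝ → ℝ)
    (hU' : ∀ y ∈ Icc (-L/2) (L/2), HasDerivAt U (U' y) y)
    (hU'c : ContinuousOn U' (Icc (-L/2) (L/2)))
    (hq' : ∀ y ∈ Icc (-L/2) (L/2), HasDerivAt q (q' y) y)
    (hq'c : ContinuousOn q' (Icc (-L/2) (L/2)))
    -- standing assumptions
    (hqpos : ∃ y ∈ Ioo (-L/2) (L/2), 0 < q y)
    (hqneg : ∃ y ∈ Ioo (-L/2) (L/2), q y < 0)
    (hsimple : ∀ y ∈ Icc (-L/2) (L/2), q y = 0 → q' y ≠ 0)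
    -- Class (i) conditions for α with profile m
    (α : ℝ) (m : ℝ → ℝ)
    (hmcont : ContinuousOn m (Icc (-L/2) (L/2)))
    (hm : ∀ y ∈ Icc (-L/2) (L/2), (Real.pi^2/L^2 + 1/Ld^2) * m y * (U y - α) = q y)
    (hsgn : (∀ y ∈ Icc (-L/2) (L/2), 0 ≤ m y) ∨ (∀ y ∈ Icc (-L/2) (L/2), m y ≤ 0)) :
    -- (a) critical latitudes coincide with nodes of U − α
    {y ∈ Ioo (-L/2) (L/2) | q y = 0} = {y ∈ Ioo (-L/2) (L/2) | U y = α} ∧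
    -- (b) m never vanishes in Ω
    (∀ y ∈ Ioo (-L/2) (L/2), m y ≠ 0) ∧
    -- (c) α is in the open range of U
    ((∃ y ∈ Icc (-L/2) (L/2), U y < α) ∧ (∃ y ∈ Icc (-L/2) (L/2), α < U y)) ∧
    -- (d) uniqueness of α
    (∀ (α' : ℝ) (m' : ℝ → ℝ),
      ContinuousOn m' (Icc (-L/2) (L/2)) →
      (∀ y ∈ Icc (-L/2) (L/2), (Real.pi^2/L^2 + 1/Ld^2) * m' y * (U y - α') = q y) →
      ((∀ y ∈ Icc (-L/2) (L/2), 0 ≤ m' y) ∨ (∀ y ∈ Icc (-L/2) (L/2), m' y ≤ 0)) →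
      α' = α) := by
  have hκ : 0 < Real.pi^2/L^2 + 1/Ld^2 := by
    have h1 : (0:ℝ) < Real.pi^2/L^2 := div_pos (pow_pos Real.pi_pos 2) (pow_pos hL 2)
    have h2 : (0:ℝ) < 1/Ld^2 := div_pos one_pos (pow_pos hLd 2)
    linarith
  -- key: a zero of q in the open channel is a node of U, for any class-(i) pair
  have key : ∀ (β : ℝ) (mm : ℝ → ℝ),
      (∀ y ∈ Icc (-L/2) (L/2), (Real.pi^2/L^2 + 1/Ld^2) * mm y * (U y - β) = q y) →
      ((∀ y ∈ Icc (-L/2) (L/2), 0 ≤ mm y) ∨ (∀ y ∈ Icc (-L/2) (L/2), mm y ≤ 0)) →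
      ∀ y ∈ Ioo (-L/2) (L/2), q y = 0 → U y = β := by
    intro β mm hmm hs y hy hq0
    exact node_of_zero (-L/2) (L/2) _ β hκ U q mm hmm hs y hy hq0 (q' y)
      (hq' y (Ioo_subset_Icc_self hy)) (hsimple y (Ioo_subset_Icc_self hy) hq0)
      (hU' y (Ioo_subset_Icc_self hy)).continuousAt
  obtain ⟨yp, hyp, hqp⟩ := hqpos
  obtain ⟨yn, hyn, hqn⟩ := hqneg
  refine ⟨?_, ?_, ?_, ?_⟩
  · -- (a)
    ext y
    simp only [mem_setOf_eq]
    constructor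
    · rintro ⟨hy, hq0⟩
      exact ⟨hy, key α m hm hsgn y hy hq0⟩
    · rintro ⟨hy, hUy⟩
      refine ⟨hy, ?_⟩
      have := hm y (Ioo_subset_Icc_self hy)
      rw [hUy, sub_self, mul_zero] at this
      exact this.symm
  · -- (b)
    intro y hy hm0
    have hq0 : q y = 0 := by
      have := hm y (Ioo_subset_Icc_self hy)
      rw [hm0, mul_zero, zero_mul] at this
      exact this.symm
    have hUy : U y = α := key α m hm hsgn y hy hq0
    have hIccN : Icc (-L/2) (L/2) ∈ 𝓝 y := Icc_mem_nhds hy.1 hy.2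
    have hmten : Tendsto m (𝓝[≠] y) (𝓝 0) := by
      have h := (hmcont.continuousAt hIccN).tendsto
      rw [hm0] at h
      exact h.mono_left nhdsWithin_le_nhds
    have hslU := hasDerivAt_iff_tendsto_slope.mp (hU' y (Ioo_subset_Icc_self hy))
    have heq : ∀ᶠ z in 𝓝[≠] y,
        slope q y z = (Real.pi^2/L^2 + 1/Ld^2) * m z * slope U y z := by
      filter_upwards [mem_nhdsWithin_of_mem_nhds hIccN, self_mem_nhdsWithin] with z hzI hzne
      have hqz := hm z hzI
      rw [slope_def_field, slope_def_field, hq0, sub_zero, ← hqz, hUy]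
      ring
    have hlim : Tendsto (slope q y) (𝓝[≠] y) (𝓝 0) := by
      have h : Tendsto (fun z => (Real.pi^2/L^2 + 1/Ld^2) * m z * slope U y z)
          (𝓝[≠] y) (𝓝 ((Real.pi^2/L^2 + 1/Ld^2) * 0 * U' y)) :=
        (tendsto_const_nhds.mul hmten).mul hslU
      rw [mul_zero, zero_mul] at h
      exact h.congr' (EventuallyEq.symm heq)
    have hqd := hasDerivAt_iff_tendsto_slope.mp (hq' y (Ioo_subset_Icc_self hy))
    exact hsimple y (Ioo_subset_Icc_self hy) hq0 (tendsto_nhds_unique hqd hlim)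
  · -- (c)
    have hmp := hm yp (Ioo_subset_Icc_self hyp)
    have hmn := hm yn (Ioo_subset_Icc_self hyn)
    rcases hsgn with hpos | hneg
    · refine ⟨⟨yn, Ioo_subset_Icc_self hyn, ?_⟩, ⟨yp, Ioo_subset_Icc_self hyp, ?_⟩⟩
      · nlinarith [mul_nonneg hκ.le (hpos yn (Ioo_subset_Icc_self hyn))]
      · nlinarith [mul_nonneg hκ.le (hpos yp (Ioo_subset_Icc_self hyp))]
    · refine ⟨⟨yp, Ioo_subset_Icc_self hyp, ?_⟩, ⟨yn, Ioo_subset_Icc_self hyn, ?_⟩⟩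
      · nlinarith [mul_nonpos_of_nonneg_of_nonpos hκ.le (hneg yp (Ioo_subset_Icc_self hyp))]
      · nlinarith [mul_nonpos_of_nonneg_of_nonpos hκ.le (hneg yn (Ioo_subset_Icc_self hyn))]
  · -- (d)
    intro α' m' hm'c hm' hsgn'
    have hqc : ContinuousOn q (Icc (-L/2) (L/2)) :=
      fun z hz => (hq' z hz).continuousAt.continuousWithinAt
    obtain ⟨y0, hy0, hqy0⟩ : ∃ y0 ∈ Ioo (-L/2) (L/2), q y0 = 0 := by
      rcases lt_trichotomy yn yp with h | h | h
      · have hsub : Icc yn yp ⊆ Icc (-L/2) (L/2) := Icc_subset_Icc hyn.1.le hyp.2.le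
        have := intermediate_value_Ioo h.le (hqc.mono hsub)
        obtain ⟨y0, hy0, hqy0⟩ := this ⟨hqn, hqp⟩
        exact ⟨y0, ⟨hyn.1.trans hy0.1, hy0.2.trans hyp.2⟩, hqy0⟩
      · subst h; linarith
      · have hsub : Icc yp yn ⊆ Icc (-L/2) (L/2) := Icc_subset_Icc hyp.1.le hyn.2.le
        have := intermediate_value_Ioo' h.le (hqc.mono hsub)
        obtain ⟨y0, hy0, hqy0⟩ := this ⟨hqn, hqp⟩
        exact ⟨y0, ⟨hyp.1.trans hy0.1, hy0.2.trans hyn.2⟩, hqy0⟩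
    have h1 : U y0 = α := key α m hm hsgn y0 hy0 hqy0
    have h2 : U y0 = α' := key α' m' hm' hsgn' y0 hy0 hqy0
    exact h2.symm.trans h1
end
end

section
/- (Section 3.2: choosing α outside the images of the sign sets of q.) Suppose the standing assumptions hold. Suppose α ∈ ℝ satisfies min U < α < max U on [−L/2, L/2], α ∉ {U(y) : y ∈ [−L/2, L/2], q(y) > 0} ∪ {U(y) : y ∈ [−L/2, L/2], q(y) < 0}, and U′(y) ≠ 0 at every y ∈ [−L/2, L/2] with U(y) = α. Then every y ∈ [−L/2, L/2] with U(y) = α satisfies q(y) = 0, and a continuous reciprocal Rossby Mach number profile m for α exists; moreover at each point y with U(y) = α one has m(y) = q′(y)/(κ₀² U′(y)) ≠ 0. -/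
open Set Filter Topology

/-!
At a node `y₀` of `U - α` the avoidance hypotheses force `q y₀ = 0`, so `q / (κ₀² (U - α))` is a
`0/0` quotient there. Writing both numerator and denominator as slopes from `y₀`, the quotient
tends to `q' y₀ / (κ₀² U' y₀)` because `U' y₀ ≠ 0`; defining `m` by this value at the nodes makes it
continuous, and it is nonzero there because the zeros of `q` are simple.
-/

theorem div_eq_slope_div_slope {f g : ℝ → ℝ} {a : ℝ} (hfa : f a = 0) (hga : g a = 0) (b : ℝ) :
    f b / g b = slope f a b / slope g a b := by
  rcases eq_or_ne b a with rfl | hba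
  · simp [hfa, hga]
  · have hsub : b - a ≠ 0 := sub_ne_zero.mpr hba
    simp only [slope_def_field, hfa, hga, sub_zero]
    field_simp

theorem HasDerivAt.tendsto_div_of_eq_zero {f g : ℝ → ℝ} {f' g' a : ℝ}
    (hf : HasDerivAt f f' a) (hg : HasDerivAt g g' a) (hfa : f a = 0) (hga : g a = 0)
    (hg' : g' ≠ 0) : Tendsto (fun y => f y / g y) (𝓝[≠] a) (𝓝 (f' / g')) := by
  simp_rw [div_eq_slope_div_slope hfa hga]
  exact (hasDerivAt_iff_tendsto_slope.mp hf).div (hasDerivAt_iff_tendsto_slope.mp hg) hg'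

theorem continuousAt_ite_div {f g f' g' : ℝ → ℝ} {a : ℝ}
    (hf : HasDerivAt f (f' a) a) (hg : HasDerivAt g (g' a) a)
    (hzero : g a = 0 → f a = 0 ∧ g' a ≠ 0) :
    ContinuousAt (fun y => if g y = 0 then f' y / g' y else f y / g y) a := by
  by_cases hga : g a = 0
  · obtain ⟨hfa, hg'a⟩ := hzero hga
    have hne : ∀ᶠ y in 𝓝[≠] a, g y ≠ 0 := by simpa [hga] using hg.eventually_ne hg'a
    rw [← continuousWithinAt_compl_self, ContinuousWithinAt, if_pos hga]
    exact (hf.tendsto_div_of_eq_zero hg hfa hga hg'a).congr'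
      (hne.mono fun y hy => (if_neg hy).symm)
  · have hne : ∀ᶠ y in 𝓝 a, g y ≠ 0 := hg.continuousAt.eventually_ne hga
    exact (hf.continuousAt.div hg.continuousAt hga).congr
      (hne.mono fun y hy => (if_neg hy).symm)

theorem class_two_alpha_choice_general
    (L Ld : ℝ) (hLd : 0 < Ld)
    (U q U' q' : ℝ → ℝ)
    (hU' : ∀ y ∈ Icc (-L/2) (L/2), HasDerivAt U (U' y) y)
    (hq' : ∀ y ∈ Icc (-L/2) (L/2), HasDerivAt q (q' y) y)
    -- standing assumptions
    (hsimple : ∀ y ∈ Icc (-L/2) (L/2), q y = 0 → q' y ≠ 0)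
    -- the choice of α
    (α : ℝ)
    (havoid_pos : ∀ y ∈ Icc (-L/2) (L/2), 0 < q y → U y ≠ α)
    (havoid_neg : ∀ y ∈ Icc (-L/2) (L/2), q y < 0 → U y ≠ α)
    (hUnode : ∀ y ∈ Icc (-L/2) (L/2), U y = α → U' y ≠ 0) :
    (∀ y ∈ Icc (-L/2) (L/2), U y = α → q y = 0) ∧
    ∃ m : ℝ → ℝ,
      ContinuousOn m (Icc (-L/2) (L/2)) ∧
      (∀ y ∈ Icc (-L/2) (L/2), (Real.pi^2/L^2 + 1/Ld^2) * m y * (U y - α) = q y) ∧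
      (∀ y ∈ Icc (-L/2) (L/2), U y = α →
        m y = q' y / ((Real.pi^2/L^2 + 1/Ld^2) * U' y) ∧ m y ≠ 0) := by
  set κ := Real.pi^2/L^2 + 1/Ld^2
  have hκ : κ ≠ 0 := by positivity
  have hnode : ∀ y ∈ Icc (-L/2) (L/2), U y = α → q y = 0 := fun y hy hUy =>
    le_antisymm (not_lt.mp fun h => havoid_pos y hy h hUy)
      (not_lt.mp fun h => havoid_neg y hy h hUy)
  have hden : ∀ y, κ * (U y - α) = 0 ↔ U y = α := fun y => by simp [hκ, sub_eq_zero]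
  refine ⟨hnode, fun y => if κ * (U y - α) = 0 then q' y / (κ * U' y)
    else q y / (κ * (U y - α)), fun y hy => ?_, fun y hy => ?_, fun y hy hUy => ?_⟩
  · refine (continuousAt_ite_div (hq' y hy) (((hU' y hy).sub_const α).const_mul κ)
      fun h => ?_).continuousWithinAt
    have hUy := (hden y).mp h
    exact ⟨hnode y hy hUy, mul_ne_zero hκ (hUnode y hy hUy)⟩
  · by_cases hUy : U y = α
    · simp [hUy, hnode y hy hUy]
    · have hsub : U y - α ≠ 0 := sub_ne_zero.mpr hUy
      dsimp only
      rw [if_neg ((hden y).not.mpr hUy)]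
      field_simp
  · dsimp only
    rw [if_pos ((hden y).mpr hUy)]
    exact ⟨rfl, div_ne_zero (hsimple y hy (hnode y hy hUy)) (mul_ne_zero hκ (hUnode y hy hUy))⟩

/-- Section 3.2: if `α` lies in the open range of `U`, avoids the images under `U` of the
sign sets of `q`, and `U' ≠ 0` at every node of `U − α`, then every node of `U − α` is a
critical latitude, and a continuous reciprocal Rossby Mach number profile `m` for `α`
exists, with `m = q'/(κ₀² U') ≠ 0` at each node. -/
theorem class_two_alpha_choice
    (L Ld : ℝ) (hL : 0 < L) (hLd : 0 < Ld)
    (U q U' q' : ℝ → ℝ)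
    (hU' : ∀ y ∈ Icc (-L/2) (L/2), HasDerivAt U (U' y) y)
    (hU'c : ContinuousOn U' (Icc (-L/2) (L/2)))
    (hq' : ∀ y ∈ Icc (-L/2) (L/2), HasDerivAt q (q' y) y)
    (hq'c : ContinuousOn q' (Icc (-L/2) (L/2)))
    -- standing assumptions
    (hqpos : ∃ y ∈ Ioo (-L/2) (L/2), 0 < q y)
    (hqneg : ∃ y ∈ Ioo (-L/2) (L/2), q y < 0)
    (hsimple : ∀ y ∈ Icc (-L/2) (L/2), q y = 0 → q' y ≠ 0)
    -- the choice of α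
    (α : ℝ)
    (hrange : (∃ y ∈ Icc (-L/2) (L/2), U y < α) ∧ (∃ y ∈ Icc (-L/2) (L/2), α < U y))
    (havoid_pos : ∀ y ∈ Icc (-L/2) (L/2), 0 < q y → U y ≠ α)
    (havoid_neg : ∀ y ∈ Icc (-L/2) (L/2), q y < 0 → U y ≠ α)
    (hUnode : ∀ y ∈ Icc (-L/2) (L/2), U y = α → U' y ≠ 0) :
    (∀ y ∈ Icc (-L/2) (L/2), U y = α → q y = 0) ∧
    ∃ m : ℝ → ℝ,
      ContinuousOn m (Icc (-L/2) (L/2)) ∧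
      (∀ y ∈ Icc (-L/2) (L/2), (Real.pi^2/L^2 + 1/Ld^2) * m y * (U y - α) = q y) ∧
      (∀ y ∈ Icc (-L/2) (L/2), U y = α →
        m y = q' y / ((Real.pi^2/L^2 + 1/Ld^2) * U' y) ∧ m y ≠ 0) :=
  class_two_alpha_choice_general L Ld hLd U q U' q' hU' hq' hsimple α havoid_pos havoid_neg hUnode
end

section
/- (Section 3.2: monotonic zonal winds with a critical latitude satisfy the Class (ii) conditions.) Suppose the standing assumptions hold and U′(y) ≠ 0 for every y ∈ [−L/2, L/2]. Let y_l ∈ Ω be a zero of q and set α = U(y_l). Then α satisfies the Class (ii) conditions: min U < α < max U on [−L/2, L/2]; a continuous reciprocal Rossby Mach number profile m for α exists; the only point y ∈ [−L/2, L/2] with U(y) = α is y_l; and m(y_l) = q′(y_l)/(κ₀² U′(y_l)) ≠ 0. -/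
open Set

noncomputable section

/-- Section 3.2: if the zonal wind is monotonic (`U' ≠ 0` everywhere) and `y_l` is a
critical latitude in the open channel, then `α = U(y_l)` satisfies the Class (ii)
conditions: `α` is in the open range of `U`, a continuous reciprocal Rossby Mach number
profile `m` for `α` exists, `y_l` is the only node of `U − α`, and
`m(y_l) = q'(y_l)/(κ₀² U'(y_l)) ≠ 0`. -/
theorem monotonic_wind_class_two
    (L Ld : ℝ) (hL : 0 < L) (hLd : 0 < Ld)
    (U q U' q' : ℝ → ℝ)
    (hU' : ∀ y ∈ Icc (-L/2) (L/2), HasDerivAt U (U' y) y)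
    (hU'c : ContinuousOn U' (Icc (-L/2) (L/2)))
    (hq' : ∀ y ∈ Icc (-L/2) (L/2), HasDerivAt q (q' y) y)
    (hq'c : ContinuousOn q' (Icc (-L/2) (L/2)))
    -- standing assumptions
    (hqpos : ∃ y ∈ Ioo (-L/2) (L/2), 0 < q y)
    (hqneg : ∃ y ∈ Ioo (-L/2) (L/2), q y < 0)
    (hsimple : ∀ y ∈ Icc (-L/2) (L/2), q y = 0 → q' y ≠ 0)
    -- monotonic zonal wind and a critical latitude
    (hmono : ∀ y ∈ Icc (-L/2) (L/2), U' y ≠ 0)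
    (yl : ℝ) (hyl : yl ∈ Ioo (-L/2) (L/2)) (hql : q yl = 0)
    (α : ℝ) (hα : α = U yl) :
    ((∃ y ∈ Icc (-L/2) (L/2), U y < α) ∧ (∃ y ∈ Icc (-L/2) (L/2), α < U y)) ∧
    ∃ m : ℝ → ℝ,
      ContinuousOn m (Icc (-L/2) (L/2)) ∧
      (∀ y ∈ Icc (-L/2) (L/2), (Real.pi^2/L^2 + 1/Ld^2) * m y * (U y - α) = q y) ∧
      (∀ y ∈ Icc (-L/2) (L/2), U y = α → y = yl) ∧
      m yl = q' yl / ((Real.pi^2/L^2 + 1/Ld^2) * U' yl) ∧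
      m yl ≠ 0 := by
  classical
  subst hα
  set I : Set ℝ := Icc (-L/2) (L/2) with hI
  set κ : ℝ := Real.pi^2/L^2 + 1/Ld^2 with hκdef
  have hκpos : 0 < κ := by positivity
  have hylI : yl ∈ I := ⟨hyl.1.le, hyl.2.le⟩
  have hUc : ContinuousOn U I := fun z hz => (hU' z hz).continuousAt.continuousWithinAt
  have hqc : ContinuousOn q I := fun z hz => (hq' z hz).continuousAt.continuousWithinAt
  -- the derivative has a constant sign
  have hdich : (∀ y ∈ I, 0 < U' y) ∨ (∀ y ∈ I, U' y < 0) := by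
    by_contra h
    push_neg at h
    obtain ⟨⟨a, ha, ha'⟩, b, hb, hb'⟩ := h
    have ha2 : U' a < 0 := lt_of_le_of_ne ha' (hmono a ha)
    have hb2 : 0 < U' b := lt_of_le_of_ne hb' (Ne.symm (hmono b hb))
    have hsub : uIcc a b ⊆ I := (Set.ordConnected_Icc).uIcc_subset ha hb
    have := intermediate_value_uIcc (hU'c.mono hsub)
    have h0 : (0:ℝ) ∈ uIcc (U' a) (U' b) := by
      rw [Set.mem_uIcc]; left; exact ⟨ha2.le, hb2.le⟩
    obtain ⟨c, hc, hc0⟩ := this h0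
    exact hmono c (hsub hc) hc0
  -- injectivity and range facts
  have key : InjOn U I ∧ (∃ y ∈ I, U y < U yl) ∧ (∃ y ∈ I, U yl < U y) := by
    have hconv : Convex ℝ I := convex_Icc _ _
    have hend : -L/2 ≤ L/2 := by linarith
    rcases hdich with hpos | hneg
    · have hsm : StrictMonoOn U I := by
        apply strictMonoOn_of_deriv_pos hconv hUc
        intro x hx
        rw [hI, interior_Icc] at hx
        have hxI : x ∈ I := ⟨hx.1.le, hx.2.le⟩
        rw [(hU' x hxI).deriv]
        exact hpos x hxI
      refine ⟨hsm.injOn, ⟨-L/2, left_mem_Icc.2 hend, ?_⟩, ⟨L/2, right_mem_Icc.2 hend, ?_⟩⟩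
      · exact hsm (left_mem_Icc.2 hend) hylI hyl.1
      · exact hsm hylI (right_mem_Icc.2 hend) hyl.2
    · have hsm : StrictAntiOn U I := by
        apply strictAntiOn_of_deriv_neg hconv hUc
        intro x hx
        rw [hI, interior_Icc] at hx
        have hxI : x ∈ I := ⟨hx.1.le, hx.2.le⟩
        rw [(hU' x hxI).deriv]
        exact hneg x hxI
      refine ⟨hsm.injOn, ⟨L/2, right_mem_Icc.2 hend, ?_⟩, ⟨-L/2, left_mem_Icc.2 hend, ?_⟩⟩
      · exact hsm hylI (right_mem_Icc.2 hend) hyl.2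
      · exact hsm (left_mem_Icc.2 hend) hylI hyl.1
  obtain ⟨hinj, hlt, hgt⟩ := key
  refine ⟨⟨hlt, hgt⟩, ?_⟩
  -- the profile
  set m : ℝ → ℝ := fun y => if y = yl then q' yl / (κ * U' yl) else q y / (κ * (U y - U yl))
    with hmdef
  have hmyl : m yl = q' yl / (κ * U' yl) := if_pos rfl
  have hmne : m yl ≠ 0 := by
    rw [hmyl]
    exact div_ne_zero (hsimple yl hylI hql) (mul_ne_zero hκpos.ne' (hmono yl hylI))
  have huniq : ∀ y ∈ I, U y = U yl → y = yl := fun y hy h => hinj hy hylI h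
  have heq : ∀ y ∈ I, κ * m y * (U y - U yl) = q y := by
    intro y hy
    by_cases h : y = yl
    · subst h; simp [hql]
    · have hU : U y - U yl ≠ 0 := sub_ne_zero.2 (fun hh => h (huniq y hy hh))
      rw [hmdef]; simp only [if_neg h]
      field_simp
  -- continuity
  have hcont : ContinuousOn m I := by
    intro y hy
    by_cases h : y = yl
    · subst h
      apply ContinuousAt.continuousWithinAt
      rw [ContinuousAt, ← nhdsNE_sup_pure y]
      refine Filter.Tendsto.sup ?_ (tendsto_pure_nhds m y)
      have hq'' := hasDerivAt_iff_tendsto_slope.1 (hq' y hy)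
      have hU'' := hasDerivAt_iff_tendsto_slope.1 (hU' y hy)
      have hlim : Filter.Tendsto (fun z => slope q y z / (κ * slope U y z)) (nhdsWithin y {y}ᶜ)
          (nhds (q' y / (κ * U' y))) :=
        hq''.div ((tendsto_const_nhds.mul hU'')) (mul_ne_zero hκpos.ne' (hmono y hy))
      rw [hmyl]
      refine hlim.congr' ?_
      filter_upwards [self_mem_nhdsWithin] with z hz
      have hzy : z ≠ y := hz
      have ht : z - y ≠ 0 := sub_ne_zero.2 hzy
      rw [hmdef]; simp only [if_neg hzy]
      rw [slope_def_field, slope_def_field, hql, sub_zero]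
      by_cases hb : U z - U y = 0
      · rw [hb]; simp
      · field_simp
    · -- away from yl
      have hg : ContinuousWithinAt (fun z => q z / (κ * (U z - U yl))) I y := by
        refine (hqc y hy).div ?_ ?_
        · exact tendsto_const_nhds.mul ((hUc y hy).sub tendsto_const_nhds)
        · exact mul_ne_zero hκpos.ne' (sub_ne_zero.2 (fun hh => h (huniq y hy hh)))
      refine hg.congr_of_eventuallyEq ?_ ?_
      · filter_upwards [mem_nhdsWithin_of_mem_nhds (IsOpen.mem_nhds isOpen_compl_singleton h)]
          with z hz
        rw [hmdef]; simp only [if_neg (Set.mem_compl_singleton_iff.1 hz)]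
      · rw [hmdef]; simp only [if_neg h]
  exact ⟨m, hcont, heq, huniq, hmyl, hmne⟩
end
end

section
/- (Plemelj-type limit used for the critical-layer jump formula, equations (4.13)–(4.16).) Let a < b be real numbers, let h : [a, b] → ℝ be continuous, let V : [a, b] → ℝ be continuously differentiable, and let c₀ ∈ ℝ be such that V − c₀ has exactly N ≥ 0 zeros y₁ < ⋯ < y_N, all lying in the open interval (a, b), with V′(y_j) ≠ 0 for each j. Then lim_{ε→0+} ∫_a^b ε·h(y)/((V(y) − c₀)² + ε²) dy = π · Σ_{j=1}^N h(y_j)/|V′(y_j)|. -/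
/-!
Write `g = V - c₀`. For `ε > 0` the kernel `ε g' / (g² + ε²)` is the derivative of
`arctan (g / ε)`. Across a simple zero `y` of `g` this arctangent increases by almost `π`, and by
almost nothing across any interval avoiding `y`, so near `y` the kernel acts like `π` times a
Dirac mass at `y`; writing `h = (h / g') g'` then gives the contribution `π h(y) / |g'(y)|`.
Away from the zeros `g` is bounded below and the integrand is `O(ε)`.
-/

open Set Filter Real MeasureTheory Topology Metric Function

lemma tendsto_arctan_div_nhdsGT_zero_of_pos {c : ℝ} (hc : 0 < c) :
    Tendsto (fun ε => arctan (c / ε)) (𝓝[>] 0) (𝓝 (π / 2)) := by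
  have : Tendsto (fun ε : ℝ => c / ε) (𝓝[>] 0) atTop := by
    simpa [div_eq_mul_inv] using tendsto_inv_nhdsGT_zero.const_mul_atTop hc
  exact (tendsto_arctan_atTop.mono_right nhdsWithin_le_nhds).comp this

lemma tendsto_arctan_div_nhdsGT_zero_of_neg {c : ℝ} (hc : c < 0) :
    Tendsto (fun ε => arctan (c / ε)) (𝓝[>] 0) (𝓝 (-(π / 2))) := by
  simpa [neg_div, arctan_neg] using (tendsto_arctan_div_nhdsGT_zero_of_pos (neg_pos.2 hc)).neg

lemma HasDerivAt.arctan_div_const {g : ℝ → ℝ} {g' x ε : ℝ} (hg : HasDerivAt g g' x)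
    (hε : ε ≠ 0) :
    HasDerivAt (fun z => Real.arctan (g z / ε)) (ε * g' / (g x ^ 2 + ε ^ 2)) x := by
  convert (hg.div_const ε).arctan using 1
  field_simp
  ring

lemma ContinuousOn.mul_div_sq_add_sq {X : Type*} [TopologicalSpace X] {s : Set X}
    {f g : X → ℝ} {ε : ℝ} (hf : ContinuousOn f s) (hg : ContinuousOn g s) (hε : ε ≠ 0) :
    ContinuousOn (fun x => ε * f x / (g x ^ 2 + ε ^ 2)) s :=
  (continuousOn_const.mul hf).div ((hg.pow 2).add continuousOn_const) fun _ _ => by positivity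

section Kernel

variable {g g' : ℝ → ℝ}

lemma integral_mul_div_sq_add_sq_eq_arctan {s t ε : ℝ} (hε : ε ≠ 0)
    (hg : ∀ x ∈ uIcc s t, HasDerivAt g (g' x) x) (hg' : ContinuousOn g' (uIcc s t)) :
    ∫ x in s..t, ε * g' x / (g x ^ 2 + ε ^ 2) = arctan (g t / ε) - arctan (g s / ε) :=
  intervalIntegral.integral_eq_sub_of_hasDerivAt (fun x hx => (hg x hx).arctan_div_const hε)
    (hg'.mul_div_sq_add_sq (HasDerivAt.continuousOn hg) hε).intervalIntegrable

lemma abs_integral_mul_kernel_le {s t ε c : ℝ} {φ : ℝ → ℝ} (hst : s ≤ t) (hε : 0 < ε)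
    (hg : ∀ x ∈ Icc s t, HasDerivAt g (g' x) x) (hg' : ContinuousOn g' (Icc s t))
    (hg'_nonneg : ∀ x ∈ Icc s t, 0 ≤ g' x) (hφ : ∀ x ∈ Icc s t, |φ x| ≤ c) :
    |∫ x in s..t, φ x * (ε * g' x / (g x ^ 2 + ε ^ 2))| ≤
      c * (arctan (g t / ε) - arctan (g s / ε)) := by
  have hK : ContinuousOn (fun x => ε * g' x / (g x ^ 2 + ε ^ 2)) (Icc s t) :=
    hg'.mul_div_sq_add_sq (HasDerivAt.continuousOn hg) hε.ne'
  rw [← uIcc_of_le hst] at hg hg'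
  rw [← Real.norm_eq_abs]
  calc ‖∫ x in s..t, φ x * (ε * g' x / (g x ^ 2 + ε ^ 2))‖
      ≤ ∫ x in s..t, c * (ε * g' x / (g x ^ 2 + ε ^ 2)) := by
        refine intervalIntegral.norm_integral_le_of_norm_le hst (ae_of_all _ fun x hx => ?_)
          ((continuousOn_const.mul hK).intervalIntegrable_of_Icc (μ := volume) hst)
        have hKx : 0 ≤ ε * g' x / (g x ^ 2 + ε ^ 2) := by
          have := hg'_nonneg x (Ioc_subset_Icc_self hx)
          positivity
        rw [Real.norm_eq_abs, abs_mul, abs_of_nonneg hKx]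
        exact mul_le_mul_of_nonneg_right (hφ x (Ioc_subset_Icc_self hx)) hKx
    _ = c * (arctan (g t / ε) - arctan (g s / ε)) := by
        rw [intervalIntegral.integral_const_mul, integral_mul_div_sq_add_sq_eq_arctan hε.ne' hg hg']

lemma abs_integral_mul_kernel_le_of_abs_le_on_Icc {p s t q ε M ζ : ℝ} {φ : ℝ → ℝ}
    (hps : p ≤ s) (hst : s ≤ t) (htq : t ≤ q) (hε : 0 < ε)
    (hg : ∀ x ∈ Icc p q, HasDerivAt g (g' x) x) (hg' : ContinuousOn g' (Icc p q))
    (hg'_nonneg : ∀ x ∈ Icc p q, 0 ≤ g' x) (hφ : ContinuousOn φ (Icc p q))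
    (hM : ∀ x ∈ Icc p q, |φ x| ≤ M) (hζ : ∀ x ∈ Icc s t, |φ x| ≤ ζ) :
    |∫ x in p..q, φ x * (ε * g' x / (g x ^ 2 + ε ^ 2))| ≤
      M * (arctan (g s / ε) - arctan (g p / ε)) + ζ * (arctan (g t / ε) - arctan (g s / ε)) +
        M * (arctan (g q / ε) - arctan (g t / ε)) := by
  have hint : ∀ u ∈ Icc p q, ∀ v ∈ Icc p q,
      IntervalIntegrable (fun x => φ x * (ε * g' x / (g x ^ 2 + ε ^ 2))) volume u v :=
    fun u hu v hv => ((hφ.mul (hg'.mul_div_sq_add_sq (HasDerivAt.continuousOn hg) hε.ne')).mono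
      (uIcc_subset_Icc hu hv)).intervalIntegrable
  have hpiece : ∀ u v c, p ≤ u → u ≤ v → v ≤ q → (∀ x ∈ Icc u v, |φ x| ≤ c) →
      |∫ x in u..v, φ x * (ε * g' x / (g x ^ 2 + ε ^ 2))| ≤
        c * (arctan (g v / ε) - arctan (g u / ε)) := fun u v c hpu huv hvq hc =>
    have hsub : Icc u v ⊆ Icc p q := Icc_subset_Icc hpu hvq
    abs_integral_mul_kernel_le huv hε (fun x hx => hg x (hsub hx)) (hg'.mono hsub)
      (fun x hx => hg'_nonneg x (hsub hx)) hc
  have hp : p ∈ Icc p q := ⟨le_rfl, (hps.trans hst).trans htq⟩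
  have hq : q ∈ Icc p q := ⟨(hps.trans hst).trans htq, le_rfl⟩
  have hs : s ∈ Icc p q := ⟨hps, hst.trans htq⟩
  have ht : t ∈ Icc p q := ⟨hps.trans hst, htq⟩
  rw [← intervalIntegral.integral_add_adjacent_intervals (hint p hp s hs) (hint s hs q hq),
    ← intervalIntegral.integral_add_adjacent_intervals (hint s hs t ht) (hint t ht q hq),
    ← add_assoc]
  refine (abs_add_three _ _ _).trans ?_
  linarith [hpiece p s M le_rfl hps hs.2 fun x hx => hM x (Icc_subset_Icc le_rfl hs.2 hx),
    hpiece s t ζ hps hst htq hζ,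
    hpiece t q M ht.1 htq le_rfl fun x hx => hM x (Icc_subset_Icc ht.1 le_rfl hx)]

end Kernel

section LocalLimit

variable {p q y₀ : ℝ} {g g' : ℝ → ℝ}

lemma strictMonoOn_Icc_of_hasDerivAt_pos (hg : ∀ x ∈ Icc p q, HasDerivAt g (g' x) x)
    (hg'_pos : ∀ x ∈ Icc p q, 0 < g' x) : StrictMonoOn g (Icc p q) :=
  strictMonoOn_of_hasDerivWithinAt_pos (convex_Icc p q) (HasDerivAt.continuousOn hg)
    (fun x hx => (hg x (interior_subset hx)).hasDerivWithinAt)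
    fun x hx => hg'_pos x (interior_subset hx)

lemma tendsto_integral_mul_kernel_of_eq_zero {φ : ℝ → ℝ} (hpy : p < y₀) (hyq : y₀ < q)
    (hg : ∀ x ∈ Icc p q, HasDerivAt g (g' x) x) (hg' : ContinuousOn g' (Icc p q))
    (hg'_pos : ∀ x ∈ Icc p q, 0 < g' x) (hgy : g y₀ = 0)
    (hφ : ContinuousOn φ (Icc p q)) (hφy : φ y₀ = 0) :
    Tendsto (fun ε => ∫ x in p..q, φ x * (ε * g' x / (g x ^ 2 + ε ^ 2))) (𝓝[>] 0) (𝓝 0) := by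
  have hmono := strictMonoOn_Icc_of_hasDerivAt_pos hg hg'_pos
  have hy₀ : y₀ ∈ Icc p q := ⟨hpy.le, hyq.le⟩
  have hIcc : Icc p q ∈ 𝓝 y₀ := Icc_mem_nhds hpy hyq
  obtain ⟨M, hM⟩ := isCompact_Icc.exists_bound_of_continuousOn hφ
  rw [Metric.tendsto_nhds]
  intro r hr
  set ζ := r / (π + 1)
  have hζπ : ζ * π < r := by
    rw [div_mul_eq_mul_div, div_lt_iff₀ (by positivity)]
    nlinarith [pi_pos]
  have hsmall : ∀ᶠ x in 𝓝 y₀, |φ x| < ζ :=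
    (continuous_abs.continuousAt.comp (hφ.continuousAt hIcc)).eventually_lt_const
      (by simpa [hφy] using div_pos hr (by positivity : (0 : ℝ) < π + 1))
  obtain ⟨δ, hδ, hball⟩ := nhds_basis_closedBall.mem_iff.1 (inter_mem hIcc hsmall)
  rw [closedBall_eq_Icc] at hball
  have hs : y₀ - δ ∈ Icc p q := (hball ⟨le_rfl, by linarith⟩).1
  have ht : y₀ + δ ∈ Icc p q := (hball ⟨by linarith, le_rfl⟩).1
  have hneg : ∀ x ∈ Icc p q, x < y₀ →
      Tendsto (fun ε => arctan (g x / ε)) (𝓝[>] 0) (𝓝 (-(π / 2))) :=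
    fun x hx hxy => tendsto_arctan_div_nhdsGT_zero_of_neg (hgy ▸ hmono hx hy₀ hxy)
  have hpos : ∀ x ∈ Icc p q, y₀ < x → Tendsto (fun ε => arctan (g x / ε)) (𝓝[>] 0) (𝓝 (π / 2)) :=
    fun x hx hxy => tendsto_arctan_div_nhdsGT_zero_of_pos (hgy ▸ hmono hy₀ hx hxy)
  have hbound :=
    ((((hneg _ hs (by linarith)).sub (hneg p ⟨le_rfl, (hpy.trans hyq).le⟩ hpy)).const_mul M).add
      (((hpos _ ht (by linarith)).sub (hneg _ hs (by linarith))).const_mul ζ)).add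
      (((hpos q ⟨(hpy.trans hyq).le, le_rfl⟩ hyq).sub (hpos _ ht (by linarith))).const_mul M)
  rw [show M * (-(π / 2) - -(π / 2)) + ζ * (π / 2 - -(π / 2)) + M * (π / 2 - π / 2) = ζ * π by
    ring] at hbound
  filter_upwards [self_mem_nhdsWithin, hbound.eventually_lt_const hζπ] with ε (hε : 0 < ε) hεr
  rw [Real.dist_eq, sub_zero]
  refine lt_of_le_of_lt ?_ hεr
  exact abs_integral_mul_kernel_le_of_abs_le_on_Icc hs.1 (by linarith) ht.2 hε hg hg'
    (fun x hx => (hg'_pos x hx).le) hφ (fun x hx => by simpa using hM x hx)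
    fun x hx => (hball hx).2.le

lemma tendsto_integral_mul_div_sq_add_sq_of_deriv_pos {f : ℝ → ℝ} (hpy : p < y₀) (hyq : y₀ < q)
    (hf : ContinuousOn f (Icc p q)) (hg : ∀ x ∈ Icc p q, HasDerivAt g (g' x) x)
    (hg' : ContinuousOn g' (Icc p q)) (hg'_pos : ∀ x ∈ Icc p q, 0 < g' x) (hgy : g y₀ = 0) :
    Tendsto (fun ε => ∫ x in p..q, ε * f x / (g x ^ 2 + ε ^ 2)) (𝓝[>] 0)
      (𝓝 (π * (f y₀ / g' y₀))) := by
  have hmono := strictMonoOn_Icc_of_hasDerivAt_pos hg hg'_pos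
  have hpq : p ≤ q := (hpy.trans hyq).le
  have hy₀ : y₀ ∈ Icc p q := ⟨hpy.le, hyq.le⟩
  set F := fun x => f x / g' x
  have hF : ContinuousOn F (Icc p q) := hf.div hg' fun x hx => (hg'_pos x hx).ne'
  -- the integrand is `(F - F y₀) * kernel + F y₀ * kernel`
  have hosc := tendsto_integral_mul_kernel_of_eq_zero hpy hyq hg hg' hg'_pos hgy
    (φ := fun x => F x - F y₀) (hF.sub continuousOn_const) (sub_self (F y₀))
  have hmass := ((tendsto_arctan_div_nhdsGT_zero_of_pos (hgy ▸ hmono hy₀ ⟨hpq, le_rfl⟩ hyq)).sub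
    (tendsto_arctan_div_nhdsGT_zero_of_neg (hgy ▸ hmono ⟨le_rfl, hpq⟩ hy₀ hpy))).const_mul (F y₀)
  have hlim := hosc.add hmass
  rw [zero_add, show F y₀ * (π / 2 - -(π / 2)) = π * (f y₀ / g' y₀) by ring] at hlim
  refine hlim.congr' (eventually_mem_nhdsWithin.mono fun ε (hε : 0 < ε) => ?_)
  rw [← uIcc_of_le hpq] at hg hg' hg'_pos hF
  have hK := hg'.mul_div_sq_add_sq (HasDerivAt.continuousOn hg) hε.ne'
  have hint : IntervalIntegrable (fun x => (F x - F y₀) * (ε * g' x / (g x ^ 2 + ε ^ 2)))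
      volume p q := ((hF.sub continuousOn_const).mul hK).intervalIntegrable
  rw [← integral_mul_div_sq_add_sq_eq_arctan hε.ne' hg hg', ← intervalIntegral.integral_const_mul,
    ← intervalIntegral.integral_add hint (hK.intervalIntegrable.const_mul (F y₀))]
  refine intervalIntegral.integral_congr fun x hx => ?_
  have := (hg'_pos x hx).ne'
  simp only [F]
  field_simp
  ring

lemma tendsto_integral_mul_div_sq_add_sq {f : ℝ → ℝ} (hpy : p < y₀) (hyq : y₀ < q)
    (hf : ContinuousOn f (Icc p q)) (hg : ∀ x ∈ Icc p q, HasDerivAt g (g' x) x)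
    (hg' : ContinuousOn g' (Icc p q)) (hg'_sign : ∀ x ∈ Icc p q, 0 < g' x * g' y₀)
    (hgy : g y₀ = 0) :
    Tendsto (fun ε => ∫ x in p..q, ε * f x / (g x ^ 2 + ε ^ 2)) (𝓝[>] 0)
      (𝓝 (π * (f y₀ / |g' y₀|))) := by
  rcases lt_or_gt_of_ne (mul_self_pos.1 (hg'_sign y₀ ⟨hpy.le, hyq.le⟩)) with hneg | hpos
  · have := tendsto_integral_mul_div_sq_add_sq_of_deriv_pos hpy hyq hf (fun x hx => (hg x hx).neg)
      hg'.neg (fun x hx => neg_pos.2 (neg_of_mul_pos_left (hg'_sign x hx) hneg.le))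
      (by simp [hgy])
    simpa [abs_of_neg hneg] using this
  · have := tendsto_integral_mul_div_sq_add_sq_of_deriv_pos hpy hyq hf hg hg'
      (fun x hx => pos_of_mul_pos_left (hg'_sign x hx) hpos.le) hgy
    rwa [abs_of_pos hpos]

end LocalLimit

lemma tendsto_setIntegral_mul_div_sq_add_sq_of_ne_zero {X : Type*} [TopologicalSpace X]
    [MeasurableSpace X] {μ : Measure X} [IsFiniteMeasureOnCompacts μ] {S : Set X} {f g : X → ℝ}
    (hS : IsCompact S) (hf : ContinuousOn f S) (hg : ContinuousOn g S) (hg0 : ∀ x ∈ S, g x ≠ 0) :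
    Tendsto (fun ε => ∫ x in S, ε * f x / (g x ^ 2 + ε ^ 2) ∂μ) (𝓝 0) (𝓝 0) := by
  obtain ⟨C, hC⟩ := hS.exists_bound_of_continuousOn
    (hf.div (hg.pow 2) fun x hx => pow_ne_zero 2 (hg0 x hx))
  refine squeeze_zero_norm (fun ε => norm_setIntegral_le_of_norm_le_const (C := |ε| * C)
    hS.measure_lt_top fun x hx => ?_) ?_
  · have hgx : 0 < g x ^ 2 := by have := hg0 x hx; positivity
    calc ‖ε * f x / (g x ^ 2 + ε ^ 2)‖ = |ε| * |f x| / (g x ^ 2 + ε ^ 2) := by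
          rw [Real.norm_eq_abs, abs_div, abs_mul, abs_of_pos (by positivity : 0 < g x ^ 2 + ε ^ 2)]
      _ ≤ |ε| * |f x| / g x ^ 2 := by gcongr; linarith [sq_nonneg ε]
      _ = |ε| * ‖f x / g x ^ 2‖ := by
          rw [Real.norm_eq_abs, abs_div, abs_of_pos hgx, mul_div_assoc]
      _ ≤ |ε| * C := by gcongr; exact hC x hx
  · exact (by fun_prop : Continuous fun ε : ℝ => |ε| * C * μ.real S).tendsto' 0 0 (by simp)

lemma exists_pos_closedBall_subset_pairwiseDisjoint {ι X : Type*} [Finite ι] [MetricSpace X]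
    {x : ι → X} (hx : Injective x) {s : ι → Set X} (hs : ∀ i, s i ∈ 𝓝 (x i)) :
    ∃ δ > 0, (∀ i, closedBall (x i) δ ⊆ s i) ∧
      Pairwise (Disjoint on fun i => closedBall (x i) δ) := by
  have hsub : ∀ᶠ δ in 𝓝 0, ∀ i, closedBall (x i) δ ⊆ s i :=
    eventually_all.2 fun i => eventually_closedBall_subset (hs i)
  have hsep : ∀ᶠ δ in 𝓝 (0 : ℝ), ∀ i j, i ≠ j → δ + δ < dist (x i) (x j) := by
    refine eventually_all.2 fun i => eventually_all.2 fun j => ?_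
    rcases eq_or_ne i j with rfl | hij
    · exact Eventually.of_forall fun _ h => (h rfl).elim
    · filter_upwards [eventually_lt_nhds (half_pos (dist_pos.2 (hx.ne hij)))] with δ hδ _
      linarith
  have hpos : ∀ᶠ δ in 𝓝[>] (0 : ℝ), 0 < δ := self_mem_nhdsWithin
  obtain ⟨δ, hδ, hδs, hδd⟩ := (hpos.and ((hsub.and hsep).filter_mono nhdsWithin_le_nhds)).exists
  exact ⟨δ, hδ, hδs, fun i j hij => closedBall_disjoint_closedBall (hδd i j hij)⟩

lemma setIntegral_eq_setIntegral_diff_iUnion_add_sum {X E ι : Type*} [MeasurableSpace X]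
    [NormedAddCommGroup E] [NormedSpace ℝ E] [Fintype ι] {μ : Measure X} {f : X → E}
    {s : Set X} {t : ι → Set X} (ht : ∀ i, MeasurableSet (t i)) (hd : Pairwise (Disjoint on t))
    (hts : ∀ i, t i ⊆ s) (hf : IntegrableOn f s μ) :
    ∫ x in s, f x ∂μ = ∫ x in s \ ⋃ i, t i, f x ∂μ + ∑ i, ∫ x in t i, f x ∂μ := by
  rw [← integral_iUnion_fintype ht hd fun i => hf.mono_set (hts i),
    ← setIntegral_union disjoint_sdiff_left (MeasurableSet.iUnion ht) (hf.mono_set sdiff_subset)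
      (hf.mono_set (iUnion_subset hts)), sdiff_union_of_subset (iUnion_subset hts)]

lemma intervalIntegral_eq_setIntegral_diff_iUnion_ball_add_sum {ι : Type*} [Fintype ι]
    {a b δ : ℝ} {y : ι → ℝ} {f : ℝ → ℝ} (hab : a ≤ b) (hδ : 0 ≤ δ)
    (hd : Pairwise (Disjoint on fun i => ball (y i) δ)) (hsub : ∀ i, ball (y i) δ ⊆ Icc a b)
    (hf : IntegrableOn f (Icc a b) volume) :
    ∫ x in a..b, f x =
      (∫ x in Icc a b \ ⋃ i, ball (y i) δ, f x) + ∑ i, ∫ x in (y i - δ)..(y i + δ), f x := by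
  rw [intervalIntegral.integral_of_le hab, ← integral_Icc_eq_integral_Ioc,
    setIntegral_eq_setIntegral_diff_iUnion_add_sum (fun i => measurableSet_ball) hd hsub hf]
  refine congrArg _ (Finset.sum_congr rfl fun i _ => ?_)
  rw [ball_eq_Ioo, intervalIntegral.integral_of_le (by linarith), integral_Ioc_eq_integral_Ioo]

open intervalIntegral in
/-- Plemelj-type limit (equations (4.13)–(4.16)): if `V − c₀` has exactly the simple
zeros `y 0 < ⋯ < y (N−1)`, all interior to `[a, b]`, then
`∫_a^b ε h/((V − c₀)² + ε²) → π ∑ⱼ h(yⱼ)/|V'(yⱼ)|` as `ε → 0⁺`. -/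
theorem plemelj_limit
    (a b : ℝ) (hab : a < b)
    (h : ℝ → ℝ) (hh : ContinuousOn h (Icc a b))
    (V V' : ℝ → ℝ)
    (hV' : ∀ x ∈ Icc a b, HasDerivAt V (V' x) x)
    (hV'c : ContinuousOn V' (Icc a b))
    (c₀ : ℝ) (N : ℕ)
    (y : Fin N → ℝ) (hymono : StrictMono y)
    (hyin : ∀ j, y j ∈ Ioo a b)
    (hyzero : ∀ j, V (y j) = c₀)
    (hyall : ∀ x ∈ Icc a b, V x = c₀ → ∃ j, x = y j)
    (hysimple : ∀ j, V' (y j) ≠ 0) :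
    Filter.Tendsto
      (fun ε : ℝ => ∫ x in a..b, ε * h x / ((V x - c₀)^2 + ε^2))
      (nhdsWithin 0 (Ioi 0))
      (nhds (Real.pi * ∑ j : Fin N, h (y j) / |V' (y j)|)) := by
  have hg : ∀ x ∈ Icc a b, HasDerivAt (fun x => V x - c₀) (V' x) x :=
    fun x hx => (hV' x hx).sub_const c₀
  have hsign : ∀ j, ∀ᶠ x in 𝓝 (y j), 0 < V' x * V' (y j) := fun j =>
    ((hV'c.continuousAt (Icc_mem_nhds (hyin j).1 (hyin j).2)).mul continuousAt_const).eventually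
      (lt_mem_nhds (mul_self_pos.2 (hysimple j)))
  obtain ⟨δ, hδ, hball, hdisj⟩ := exists_pos_closedBall_subset_pairwiseDisjoint hymono.injective
    fun j => inter_mem (Ioo_mem_nhds (hyin j).1 (hyin j).2) (hsign j)
  have hIcc : ∀ j, closedBall (y j) δ ⊆ Icc a b :=
    fun j => (hball j).trans (inter_subset_left.trans Ioo_subset_Icc_self)
  have hlocal : ∀ j, Tendsto (fun ε => ∫ x in (y j - δ)..(y j + δ), ε * h x / ((V x - c₀)^2 + ε^2))
      (𝓝[>] 0) (𝓝 (π * (h (y j) / |V' (y j)|))) := fun j =>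
    have hIccj : Icc (y j - δ) (y j + δ) ⊆ Icc a b := closedBall_eq_Icc ▸ hIcc j
    tendsto_integral_mul_div_sq_add_sq (by linarith) (by linarith) (hh.mono hIccj)
      (fun x hx => hg x (hIccj hx)) (hV'c.mono hIccj)
      (fun x hx => (hball j (closedBall_eq_Icc ▸ hx)).2) (sub_eq_zero.2 (hyzero j))
  have hrest := tendsto_setIntegral_mul_div_sq_add_sq_of_ne_zero (μ := volume)
    (isCompact_Icc.diff (isOpen_iUnion fun j => isOpen_ball (x := y j) (ε := δ)))
    (hh.mono sdiff_subset) ((HasDerivAt.continuousOn hg).mono sdiff_subset) fun x hx hx0 => by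
      obtain ⟨j, rfl⟩ := hyall x hx.1 (sub_eq_zero.1 hx0)
      exact hx.2 (mem_iUnion.2 ⟨j, mem_ball_self hδ⟩)
  have hlim := (hrest.mono_left nhdsWithin_le_nhds).add
    (tendsto_finsetSum Finset.univ fun j _ => hlocal j)
  rw [zero_add, ← Finset.mul_sum] at hlim
  refine hlim.congr' (eventually_mem_nhdsWithin.mono fun ε (hε : 0 < ε) => ?_)
  exact (intervalIntegral_eq_setIntegral_diff_iUnion_ball_add_sum hab.le hδ.le
    (fun i j hij => (hdisj hij).mono ball_subset_closedBall ball_subset_closedBall)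
    (fun j => ball_subset_closedBall.trans (hIcc j))
    (hh.mul_div_sq_add_sq (HasDerivAt.continuousOn hg) hε.ne').integrableOn_Icc).symm
end

section
/- (Oscillatory neutral mode of the sech² model, Section 5.1.) For every real ω, the function ψ(y) = ω·cos(ωy) − tanh(y)·sin(ωy) satisfies ψ″(y) + (ω² + 2(sech y)²)ψ(y) = 0 for all y ∈ ℝ. Consequently, for d > 0 and real a, b with d(b − a) = 2, and k ≥ 0 with ω² = d(a − 1) − k² ≥ 0, ψ solves the neutral-mode equation ψ″(y) − (k² + d)ψ(y) + d·(a + (b − a)(sech y)²)ψ(y) = 0 on ℝ. -/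
open Real

noncomputable section

lemma hasDerivAt_tanh' (y : ℝ) :
    HasDerivAt Real.tanh ((Real.cosh y)⁻¹ ^ 2) y := by
  have hc := (Real.cosh_pos y).ne'
  have h : HasDerivAt (fun t => Real.sinh t / Real.cosh t)
      ((Real.cosh y * Real.cosh y - Real.sinh y * Real.sinh y) / Real.cosh y ^ 2) y :=
    (Real.hasDerivAt_sinh y).div (Real.hasDerivAt_cosh y) hc
  have hf : Real.tanh = fun t => Real.sinh t / Real.cosh t :=
    funext fun t => Real.tanh_eq_sinh_div_cosh t
  rw [hf]
  convert h using 1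
  have hid := Real.cosh_sq_sub_sinh_sq y
  field_simp
  nlinarith [hid]

lemma hasDerivAt_sech_sq (y : ℝ) :
    HasDerivAt (fun t : ℝ => (Real.cosh t)⁻¹ ^ 2)
      (-(2 * Real.sinh y) * (Real.cosh y)⁻¹ ^ 3) y := by
  have hc := (Real.cosh_pos y).ne'
  have h1 : HasDerivAt (fun t : ℝ => Real.cosh t ^ 2)
      (2 * Real.cosh y ^ 1 * Real.sinh y) y := (Real.hasDerivAt_cosh y).pow 2
  have h2 : HasDerivAt (fun t : ℝ => (Real.cosh t ^ 2)⁻¹)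
      (-(2 * Real.cosh y ^ 1 * Real.sinh y) / (Real.cosh y ^ 2) ^ 2) y :=
    h1.inv (pow_ne_zero 2 hc)
  have he : (fun t : ℝ => (Real.cosh t ^ 2)⁻¹) = fun t : ℝ => (Real.cosh t)⁻¹ ^ 2 := by
    funext t; rw [inv_pow]
  rw [he] at h2
  convert h2 using 1
  field_simp

lemma psi_deriv (ω : ℝ) :
    deriv (fun t : ℝ => ω * Real.cos (ω * t) - Real.tanh t * Real.sin (ω * t))
      = fun y : ℝ => -(ω ^ 2) * Real.sin (ω * y)
          - ((Real.cosh y)⁻¹ ^ 2 * Real.sin (ω * y)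
             + Real.tanh y * (ω * Real.cos (ω * y))) := by
  funext y
  have h1 : HasDerivAt (fun t : ℝ => ω * t) ω y := by
    simpa using (hasDerivAt_id y).const_mul ω
  have hcos : HasDerivAt (fun t : ℝ => Real.cos (ω * t)) (-Real.sin (ω * y) * ω) y :=
    (Real.hasDerivAt_cos (ω * y)).comp y h1
  have hsin : HasDerivAt (fun t : ℝ => Real.sin (ω * t)) (Real.cos (ω * y) * ω) y :=
    (Real.hasDerivAt_sin (ω * y)).comp y h1
  have h : HasDerivAt (fun t : ℝ => ω * Real.cos (ω * t) - Real.tanh t * Real.sin (ω * t))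
      (ω * (-Real.sin (ω * y) * ω)
        - ((Real.cosh y)⁻¹ ^ 2 * Real.sin (ω * y) + Real.tanh y * (Real.cos (ω * y) * ω))) y :=
    (hcos.const_mul ω).sub ((hasDerivAt_tanh' y).mul hsin)
  rw [h.deriv]
  ring

lemma psi_deriv2 (ω y : ℝ) :
    deriv (deriv (fun t : ℝ => ω * Real.cos (ω * t) - Real.tanh t * Real.sin (ω * t))) y
      = -(ω ^ 2) * (ω * Real.cos (ω * y))
        - (-(2 * Real.sinh y) * (Real.cosh y)⁻¹ ^ 3 * Real.sin (ω * y)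
            + (Real.cosh y)⁻¹ ^ 2 * (Real.cos (ω * y) * ω))
        - ((Real.cosh y)⁻¹ ^ 2 * (ω * Real.cos (ω * y))
            + Real.tanh y * (ω * (-Real.sin (ω * y) * ω))) := by
  rw [psi_deriv ω]
  have h1 : HasDerivAt (fun t : ℝ => ω * t) ω y := by
    simpa using (hasDerivAt_id y).const_mul ω
  have hcos : HasDerivAt (fun t : ℝ => Real.cos (ω * t)) (-Real.sin (ω * y) * ω) y :=
    (Real.hasDerivAt_cos (ω * y)).comp y h1
  have hsin : HasDerivAt (fun t : ℝ => Real.sin (ω * t)) (Real.cos (ω * y) * ω) y :=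
    (Real.hasDerivAt_sin (ω * y)).comp y h1
  have h : HasDerivAt (fun t : ℝ => -(ω ^ 2) * Real.sin (ω * t)
          - ((Real.cosh t)⁻¹ ^ 2 * Real.sin (ω * t) + Real.tanh t * (ω * Real.cos (ω * t))))
      (-(ω ^ 2) * (Real.cos (ω * y) * ω)
        - ((-(2 * Real.sinh y) * (Real.cosh y)⁻¹ ^ 3 * Real.sin (ω * y)
              + (Real.cosh y)⁻¹ ^ 2 * (Real.cos (ω * y) * ω))
            + ((Real.cosh y)⁻¹ ^ 2 * (ω * Real.cos (ω * y))
                + Real.tanh y * (ω * (-Real.sin (ω * y) * ω))))) y := by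
    exact (hsin.const_mul (-(ω ^ 2))).sub
      (((hasDerivAt_sech_sq y).mul hsin).add
        ((hasDerivAt_tanh' y).mul (hcos.const_mul ω)))
  rw [h.deriv]
  ring

lemma key (ω y : ℝ) :
    deriv (deriv (fun t : ℝ =>
        ω * Real.cos (ω * t) - Real.tanh t * Real.sin (ω * t))) y
      + (ω ^ 2 + 2 * ((Real.cosh y)⁻¹) ^ 2)
        * (ω * Real.cos (ω * y) - Real.tanh y * Real.sin (ω * y)) = 0 := by
  rw [psi_deriv2]
  have hc := (Real.cosh_pos y).ne'
  have ht : Real.tanh y = Real.sinh y / Real.cosh y := Real.tanh_eq_sinh_div_cosh y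
  rw [ht]
  field_simp
  ring

/-- Oscillatory neutral mode of the sech² model (Section 5.1): for every real `ω`,
`ψ(y) = ω cos(ωy) − tanh y · sin(ωy)` solves `ψ'' + (ω² + 2 sech²)ψ = 0`; consequently,
for `d > 0` with `d(b − a) = 2` and `k ≥ 0` with `ω² = d(a − 1) − k² ≥ 0`, it solves the
neutral-mode equation `ψ'' − (k² + d)ψ + d(a + (b−a) sech²)ψ = 0`. -/
theorem oscillatory_neutral_mode :
    (∀ ω y : ℝ,
      deriv (deriv (fun t : ℝ =>
          ω * Real.cos (ω * t) - Real.tanh t * Real.sin (ω * t))) y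
        + (ω ^ 2 + 2 * ((Real.cosh y)⁻¹) ^ 2)
          * (ω * Real.cos (ω * y) - Real.tanh y * Real.sin (ω * y)) = 0) ∧
    (∀ d a b k ω : ℝ, 0 < d → d * (b - a) = 2 → 0 ≤ k →
      ω ^ 2 = d * (a - 1) - k ^ 2 → 0 ≤ d * (a - 1) - k ^ 2 →
      ∀ y : ℝ,
        deriv (deriv (fun t : ℝ =>
            ω * Real.cos (ω * t) - Real.tanh t * Real.sin (ω * t))) y
          - (k ^ 2 + d) * (ω * Real.cos (ω * y) - Real.tanh y * Real.sin (ω * y))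
          + d * (a + (b - a) * ((Real.cosh y)⁻¹) ^ 2)
            * (ω * Real.cos (ω * y) - Real.tanh y * Real.sin (ω * y)) = 0) := by
  constructor
  · exact key
  · intro d a b k ω hd hba hk hω hnn y
    have h := key ω y
    have hcoef : -(k ^ 2 + d) + d * (a + (b - a) * ((Real.cosh y)⁻¹) ^ 2)
        = ω ^ 2 + 2 * ((Real.cosh y)⁻¹) ^ 2 := by
      have : d * (b - a) * ((Real.cosh y)⁻¹) ^ 2 = 2 * ((Real.cosh y)⁻¹) ^ 2 := by
        rw [hba]
      nlinarith [this]
    linear_combination h + (ω * Real.cos (ω * y) - Real.tanh y * Real.sin (ω * y)) * hcoef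
end
end

section
/- (Appendix D, identity (D7).) Assume the additional Appendix D setup. Let k ≥ 0 and let (c, ψ) be an unstable mode, c = c_r + i·c_i with c_i ≠ 0. Then for every real number r_c, ∫_{−L/2}^{L/2} ( (U(y) − r_c)² − (c_r − r_c)² − c_i² ) W(y) dy = ∫_{−L/2}^{L/2} (U(y) − r_c)·B(y)·|η(y)|² dy. -/
open Set

noncomputable section

/-! With `η = ψ / (U - c)` and `κ² = k² + 1/L_d²`, the mode equation becomes
`((U - c)² η')' = (U - c) (κ² (U - c) - B) η`. Hence the flux `(U - c)² η' η̄`, which vanishes at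
both walls, has derivative `(U - c)² W - (U - c) B |η|²`, and its integral is zero. Taking the real
part after multiplying by `1 + i (c_r - r_c) / c_i` turns this complex identity pointwise into
the integrand of (D7): the imaginary part is what shifts `c_r` to the arbitrary `r_c`. -/

open Complex ComplexConjugate

theorem hasDerivAt_wronskian {𝔸 : Type*} [NormedCommRing 𝔸] [NormedAlgebra ℝ 𝔸]
    {f f' g g' : ℝ → 𝔸} {f'' g'' : 𝔸} {y : ℝ}
    (hf : HasDerivAt f (f' y) y) (hf' : HasDerivAt f' f'' y)
    (hg : HasDerivAt g (g' y) y) (hg' : HasDerivAt g' g'' y) :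
    HasDerivAt (fun t => f t * g' t - f' t * g t) (f y * g'' - f'' * g y) y := by
  refine ((hf.mul hg').sub (hf'.mul hg)).congr_deriv ?_
  ring

theorem ofReal_sub_ne_zero_of_im_ne_zero {c : ℂ} (hc : c.im ≠ 0) (x : ℝ) : (x : ℂ) - c ≠ 0 := by
  intro h
  exact hc (by simpa using congrArg im h)

/-- With `u = U - c`, this is the mode equation in the form
`((U - c)² η')' = (U - c) (κ (U - c) - (q + U'')) η` for `η = ψ / (U - c)`. -/
theorem wronskian_deriv_eq_of_rayleighKuo {u ψ ψ'' q u'' κ : ℂ} (hu : u ≠ 0)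
    (hode : ψ'' - κ * ψ + q / u * ψ = 0) :
    u * ψ'' - u'' * ψ = u * (κ * u - (q + u'')) * (ψ / u) := by
  linear_combination
    u * hode - ψ * div_mul_cancel₀ q hu - (κ * u - (q + u'')) * mul_div_cancel₀ ψ hu

theorem hasDerivAt_mul_conj_of_flux {N η : ℝ → ℂ} {N' η' u b : ℂ} {κ y : ℝ}
    (hN : HasDerivAt N N' y) (hη : HasDerivAt η η' y)
    (hNy : N y = u ^ 2 * η') (hN' : N' = u * (κ * u - b) * η y) :
    HasDerivAt (fun t => N t * conj (η t))
      (u ^ 2 * ((normSq η' + κ * normSq (η y) : ℝ) : ℂ) - u * b * (normSq (η y) : ℂ)) y := by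
  refine (hN.mul hη.star).congr_deriv ?_
  rw [hNy, hN', star_def]
  push_cast
  rw [← mul_conj, ← mul_conj]
  ring

theorem re_mul_energy_density {c : ℂ} (hc : c.im ≠ 0) (u rc w b n : ℝ) :
    ((1 + (c.re - rc) / c.im * I) * ((u - c) ^ 2 * w - (u - c) * b * n)).re
      = ((u - rc) ^ 2 - (c.re - rc) ^ 2 - c.im ^ 2) * w - (u - rc) * b * n := by
  simp only [mul_re, mul_im, sub_re, sub_im, add_re, add_im, pow_two, ofReal_re, ofReal_im,
    one_re, one_im, I_re, I_im, div_ofReal_re, div_ofReal_im]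
  field_simp
  ring

theorem hasDerivAt_energyFlux {U U' U'' q : ℝ → ℝ} {c η' : ℂ} {ψ ψ' ψ'' η : ℝ → ℂ} {κ y : ℝ}
    (hc : c.im ≠ 0) (hU : HasDerivAt U (U' y) y) (hU' : HasDerivAt U' (U'' y) y)
    (hψ : HasDerivAt ψ (ψ' y) y) (hψ' : HasDerivAt ψ' (ψ'' y) y)
    (hode : ψ'' y - (κ : ℂ) * ψ y + (q y : ℂ) / ((U y : ℂ) - c) * ψ y = 0)
    (hη : η = fun t => ψ t / ((U t : ℂ) - c))
    (hη' : η' = (ψ' y * ((U y : ℂ) - c) - ψ y * U' y) / ((U y : ℂ) - c) ^ 2) :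
    HasDerivAt (fun t => (((U t : ℂ) - c) * ψ' t - U' t * ψ t) * conj (η t))
      (((U y : ℂ) - c) ^ 2 * ((normSq η' + κ * normSq (η y) : ℝ) : ℂ)
        - ((U y : ℂ) - c) * ((q y + U'' y : ℝ) : ℂ) * (normSq (η y) : ℂ)) y := by
  subst hη'
  have hu := ofReal_sub_ne_zero_of_im_ne_zero hc (U y)
  have hUc : HasDerivAt (fun t => (U t : ℂ) - c) (U' y) y := hU.ofReal_comp.sub_const c
  refine hasDerivAt_mul_conj_of_flux
    (hasDerivAt_wronskian hUc hU'.ofReal_comp hψ hψ') (hη ▸ hψ.div hUc hu) ?_ ?_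
  · rw [mul_div_cancel₀ _ (pow_ne_zero 2 hu)]
    ring
  · rw [hη]
    push_cast
    exact wronskian_deriv_eq_of_rayleighKuo hu hode

open intervalIntegral in
theorem integral_eq_integral_of_hasDerivAt_sub {a b : ℝ} {f F G : ℝ → ℝ}
    (hf : ∀ y ∈ uIcc a b, HasDerivAt f (F y - G y) y)
    (hF : ContinuousOn F (uIcc a b)) (hG : ContinuousOn G (uIcc a b)) (hfab : f a = f b) :
    ∫ y in a..b, F y = ∫ y in a..b, G y := by
  have h := integral_eq_sub_of_hasDerivAt hf (hF.sub hG).intervalIntegrable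
  rwa [integral_sub hF.intervalIntegrable hG.intervalIntegrable, hfab, sub_self, sub_eq_zero] at h

open intervalIntegral in
theorem appendixD_identity_D7_general
    (L Ld : ℝ) (hL : 0 < L)
    (U q U' U'' : ℝ → ℝ)
    (hq : ContDiffOn ℝ 1 q (Icc (-L/2) (L/2)))
    (hU' : ∀ y ∈ Icc (-L/2) (L/2), HasDerivAt U (U' y) y)
    (hU'' : ∀ y ∈ Icc (-L/2) (L/2), HasDerivAt U' (U'' y) y)
    (hU''c : ContinuousOn U'' (Icc (-L/2) (L/2)))
    (k : ℝ) (c : ℂ) (ψ ψ' ψ'' : ℝ → ℂ)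
    (hmode : IsUnstableMode L Ld k U q c ψ ψ' ψ'')
    -- Appendix D quantities
    (B : ℝ → ℝ) (hB : B = fun y => q y + U'' y)
    (η η' : ℝ → ℂ)
    (hη : η = fun y => ψ y / ((U y : ℂ) - c))
    (hη' : η' = fun y =>
      (ψ' y * ((U y : ℂ) - c) - ψ y * (U' y : ℂ)) / ((U y : ℂ) - c) ^ 2)
    (W : ℝ → ℝ)
    (hW : W = fun y => Complex.normSq (η' y) + (k ^ 2 + 1 / Ld ^ 2) * Complex.normSq (η y)) :
    ∀ rc : ℝ,
      (∫ y in (-L/2)..(L/2),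
          ((U y - rc) ^ 2 - (c.re - rc) ^ 2 - c.im ^ 2) * W y)
        = ∫ y in (-L/2)..(L/2), (U y - rc) * B y * Complex.normSq (η y) := by
  intro rc
  obtain ⟨hc, hψ, hψ', -, -, hψa, hψb, hode⟩ := hmode
  rw [← uIcc_of_le (by linarith : -L/2 ≤ L/2)] at hq hU' hU'' hU''c hψ hψ' hode
  have hne : ∀ t, (U t : ℂ) - c ≠ 0 := fun t => ofReal_sub_ne_zero_of_im_ne_zero hc (U t)
  have hUc := HasDerivAt.continuousOn hU'
  have hU'c := HasDerivAt.continuousOn hU''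
  have hψc := HasDerivAt.continuousOn hψ
  have hψ'c := HasDerivAt.continuousOn hψ'
  have hqc := hq.continuousOn
  refine integral_eq_integral_of_hasDerivAt_sub (f := fun t => ((1 + (c.re - rc) / c.im * I) *
      ((((U t : ℂ) - c) * ψ' t - U' t * ψ t) * conj (η t))).re) (fun y hy => ?_) ?_ ?_ ?_
  · have := reCLM.hasFDerivAt.comp_hasDerivAt y ((hasDerivAt_energyFlux hc (hU' y hy)
      (hU'' y hy) (hψ y hy) (hψ' y hy) (hode y hy) hη (congrFun hη' y)).const_mul
        (1 + (c.re - rc) / c.im * I))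
    rw [reCLM_apply, re_mul_energy_density hc] at this
    simpa only [hB, hW, Function.comp_def, reCLM_apply] using this
  · rw [hW, hη', hη]
    fun_prop (disch := intros; first | exact hne _ | exact pow_ne_zero 2 (hne _))
  · rw [hB, hη]
    fun_prop (disch := intros; exact hne _)
  · simp [hη, hψa, hψb]

open intervalIntegral in
/-- Appendix D identity (D7): for an unstable mode, with `η = ψ/(U − c)`,
`W = |η'|² + (k² + 1/L_d²)|η|²` and `B = q + U''`, for every real `r_c`,
`∫ ((U − r_c)² − (c_r − r_c)² − c_i²) W = ∫ (U − r_c) B |η|²`. -/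
theorem appendixD_identity_D7
    (L Ld : ℝ) (hL : 0 < L) (hLd : 0 < Ld)
    (U q U' U'' : ℝ → ℝ)
    (hq : ContDiffOn ℝ 1 q (Icc (-L/2) (L/2)))
    (hU' : ∀ y ∈ Icc (-L/2) (L/2), HasDerivAt U (U' y) y)
    (hU'' : ∀ y ∈ Icc (-L/2) (L/2), HasDerivAt U' (U'' y) y)
    (hU''c : ContinuousOn U'' (Icc (-L/2) (L/2)))
    (k : ℝ) (hk : 0 ≤ k) (c : ℂ) (ψ ψ' ψ'' : ℝ → ℂ)
    (hmode : IsUnstableMode L Ld k U q c ψ ψ' ψ'')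
    -- Appendix D quantities
    (B : ℝ → ℝ) (hB : B = fun y => q y + U'' y)
    (η η' : ℝ → ℂ)
    (hη : η = fun y => ψ y / ((U y : ℂ) - c))
    (hη' : η' = fun y =>
      (ψ' y * ((U y : ℂ) - c) - ψ y * (U' y : ℂ)) / ((U y : ℂ) - c) ^ 2)
    (W : ℝ → ℝ)
    (hW : W = fun y => Complex.normSq (η' y) + (k ^ 2 + 1 / Ld ^ 2) * Complex.normSq (η y)) :
    ∀ rc : ℝ,
      (∫ y in (-L/2)..(L/2),
          ((U y - rc) ^ 2 - (c.re - rc) ^ 2 - c.im ^ 2) * W y)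
        = ∫ y in (-L/2)..(L/2), (U y - rc) * B y * Complex.normSq (η y) :=
  appendixD_identity_D7_general L Ld hL U q U' U'' hq hU' hU'' hU''c k c ψ ψ' ψ'' hmode B hB η η' hη
    hη' W hW
end
end
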